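/- arXiv:1605.00443 — 11 statements merged into one kernel-verified Lean document; each statement's English description precedes it below -/
import Mathlib

section
/- Let n ≥ 1 and let a_1, …, a_n ∈ ℝ^n be such that the matrix A with rows a_1, …, a_n satisfies det(A) ≠ 0. Then there exists a non-zero integral vector x ∈ ℤ^n \ {0} such that Σ_{i=1}^n |a_i·x| + |Σ_{i=1}^n a_i·x| ≤ ((n+1)! · |det(A)|)^{1/n}. -/
/-!
Minkowski's convex body theorem, applied to the preimage under `A` of
`K_t = {w | ∑ |w i| + |∑ w i| ≤ t}`. Writing `w i = (w i)⁺ - (w i)⁻`, the body `K_t` is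
`{∑ (w i)⁺ ≤ t/2, ∑ (w i)⁻ ≤ t/2}`. Slicing along the first coordinate and Pascal's rule give
`vol {∑ (w i)⁺ ≤ a, ∑ (w i)⁻ ≤ b} = ∑_{i+j=n} C(n,i) a^i/i! b^j/j!`, so
`vol K_t = (t/2)^n/n! ∑_k C(n,k)²`, and Cauchy–Schwarz gives `∑_k C(n,k)² ≥ 4^n/(n+1)`.
Hence `vol K_t ≥ 2^n t^n/(n+1)! = 2^n |det A|` for `t = ((n+1)! |det A|)^(1/n)`.
-/

open Finset MeasureTheory
open scoped Nat Matrix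

def posNegBody (n : ℕ) (a b : ℝ) : Set (Fin n → ℝ) :=
  {y | ∑ i, (y i)⁺ ≤ a ∧ ∑ i, (y i)⁻ ≤ b}

lemma nonneg_of_mem_posNegBody {n : ℕ} {a b : ℝ} {y : Fin n → ℝ}
    (hy : y ∈ posNegBody n a b) : 0 ≤ a ∧ 0 ≤ b :=
  ⟨(sum_nonneg fun i _ => posPart_nonneg (y i)).trans hy.1,
    (sum_nonneg fun i _ => negPart_nonneg (y i)).trans hy.2⟩

lemma volume_posNegBody_succ (n : ℕ) (a b : ℝ) :
    volume (posNegBody (n + 1) a b) = ∫⁻ t, volume (posNegBody n (a - t⁺) (b - t⁻)) := by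
  let T : Set (ℝ × (Fin n → ℝ)) := {p | p.2 ∈ posNegBody n (a - p.1⁺) (b - p.1⁻)}
  have hT : MeasurableSet T := by
    simp only [T, posNegBody, Set.ofPred_and]
    exact ((isClosed_le (by fun_prop) (by fun_prop)).inter
      (isClosed_le (by fun_prop) (by fun_prop))).measurableSet
  have hpre : posNegBody (n + 1) a b = MeasurableEquiv.piFinSuccAbove (fun _ => ℝ) 0 ⁻¹' T := by
    ext y
    simp only [posNegBody, T, Set.mem_ofPred_eq, Set.mem_preimage, Fin.sum_univ_succ,
      MeasurableEquiv.piFinSuccAbove_apply, le_sub_iff_add_le']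
    rfl
  rw [hpre, (volume_preserving_piFinSuccAbove (fun _ => ℝ) 0).measure_preimage
    hT.nullMeasurableSet, Measure.volume_eq_prod, Measure.prod_apply hT]
  rfl

/-- The orthant of `ℝⁿ` with `i` positive and `j` negative coordinates meets `posNegBody n a b`
in a product of two simplices, of volumes `a^i/i!` and `b^j/j!`. -/
noncomputable def posNegVolume (n : ℕ) (a b : ℝ) : ℝ :=
  ∑ ij ∈ antidiagonal n, (n.choose ij.1 : ℝ) * (a ^ ij.1 / ij.1 ! * (b ^ ij.2 / ij.2 !))

lemma posNegVolume_nonneg {n : ℕ} {a b : ℝ} (ha : 0 ≤ a) (hb : 0 ≤ b) :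
    0 ≤ posNegVolume n a b :=
  sum_nonneg fun _ _ => by positivity

lemma integral_pow_div_factorial (k : ℕ) (x : ℝ) :
    ∫ s in (0 : ℝ)..x, s ^ k / k ! = x ^ (k + 1) / (k + 1)! := by
  rw [intervalIntegral.integral_div, integral_pow, Nat.factorial_succ]
  push_cast
  field_simp
  ring

lemma posNegVolume_succ (n : ℕ) (a b : ℝ) :
    posNegVolume (n + 1) a b =
      (∫ s in (0 : ℝ)..b, posNegVolume n a s) + ∫ s in (0 : ℝ)..a, posNegVolume n s b := by
  simp only [posNegVolume]
  rw [sum_antidiagonal_choose_succ_mul (fun i j => a ^ i / i ! * (b ^ j / j !)),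
    intervalIntegral.integral_finsetSum, intervalIntegral.integral_finsetSum]
  · congr 1
    · refine sum_congr rfl fun ij _ => ?_
      simp only [intervalIntegral.integral_const_mul, integral_pow_div_factorial]
    · refine sum_congr rfl fun ij hij => ?_
      rw [Nat.choose_symm_of_eq_add (mem_antidiagonal.1 hij).symm]
      simp only [intervalIntegral.integral_const_mul, intervalIntegral.integral_mul_const,
        integral_pow_div_factorial]
  all_goals intros; exact Continuous.intervalIntegrable (by fun_prop) _ _

lemma integral_posNegVolume_sub_posPart_sub_negPart (n : ℕ) {a b : ℝ} (ha : 0 ≤ a)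
    (hb : 0 ≤ b) :
    ∫ t in -b..a, posNegVolume n (a - t⁺) (b - t⁻) = posNegVolume (n + 1) a b := by
  have hint (c d : ℝ) :
      IntervalIntegrable (fun t => posNegVolume n (a - t⁺) (b - t⁻)) volume c d :=
    (by unfold posNegVolume; fun_prop : Continuous _).intervalIntegrable c d
  rw [← intervalIntegral.integral_add_adjacent_intervals (hint (-b) 0) (hint 0 a),
    posNegVolume_succ]
  congr 1
  · calc ∫ t in -b..0, posNegVolume n (a - t⁺) (b - t⁻)
        = ∫ t in -b..0, posNegVolume n a (t + b) := by
          refine intervalIntegral.integral_congr fun t ht => ?_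
          rw [Set.uIcc_of_le (by linarith)] at ht
          rw [posPart_eq_zero.2 ht.2, negPart_eq_neg.2 ht.2]
          ring_nf
      _ = ∫ s in (0 : ℝ)..b, posNegVolume n a s := by
          rw [intervalIntegral.integral_comp_add_right (posNegVolume n a), neg_add_cancel,
            zero_add]
  · calc ∫ t in (0 : ℝ)..a, posNegVolume n (a - t⁺) (b - t⁻)
        = ∫ t in (0 : ℝ)..a, posNegVolume n (a - t) b := by
          refine intervalIntegral.integral_congr fun t ht => ?_
          rw [Set.uIcc_of_le ha] at ht
          rw [posPart_eq_self.2 ht.1, negPart_eq_zero.2 ht.1, sub_zero]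
      _ = ∫ s in (0 : ℝ)..a, posNegVolume n s b := by
          rw [intervalIntegral.integral_comp_sub_left (posNegVolume n · b), sub_self, sub_zero]

lemma volume_posNegBody (n : ℕ) {a b : ℝ} (ha : 0 ≤ a) (hb : 0 ≤ b) :
    volume (posNegBody n a b) = ENNReal.ofReal (posNegVolume n a b) := by
  induction n generalizing a b with
  | zero =>
    have huniv : posNegBody 0 a b = Set.univ :=
      Set.eq_univ_of_forall fun y => ⟨by simpa using ha, by simpa using hb⟩
    simp [huniv, posNegVolume, volume_pi]
  | succ n ih =>
    let g : ℝ → ℝ := fun t => posNegVolume n (a - t⁺) (b - t⁻)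
    have hmem : ∀ t ∈ Set.Icc (-b) a, 0 ≤ a - t⁺ ∧ 0 ≤ b - t⁻ := fun t ht =>
      ⟨sub_nonneg.2 (max_le ht.2 ha), sub_nonneg.2 (max_le (neg_le.1 ht.1) hb)⟩
    have hslice (t : ℝ) : volume (posNegBody n (a - t⁺) (b - t⁻)) =
        (Set.Icc (-b) a).indicator (fun t => ENNReal.ofReal (g t)) t := by
      by_cases ht : t ∈ Set.Icc (-b) a
      · rw [Set.indicator_of_mem ht]
        exact ih (hmem t ht).1 (hmem t ht).2
      · have hempty : posNegBody n (a - t⁺) (b - t⁻) = ∅ :=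
          Set.eq_empty_of_forall_notMem fun y hy => by
            obtain ⟨h₁, h₂⟩ := nonneg_of_mem_posNegBody hy
            exact ht ⟨by linarith [neg_le_negPart t], by linarith [le_posPart t]⟩
        rw [Set.indicator_of_notMem ht, hempty, measure_empty]
    have hg : ContinuousOn g (Set.Icc (-b) a) := by unfold g posNegVolume; fun_prop
    have hg_nonneg : ∀ t ∈ Set.Icc (-b) a, 0 ≤ g t := fun t ht =>
      posNegVolume_nonneg (hmem t ht).1 (hmem t ht).2
    rw [volume_posNegBody_succ, lintegral_congr hslice, lintegral_indicator measurableSet_Icc,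
      ← ofReal_integral_eq_lintegral_ofReal hg.integrableOn_Icc
        ((ae_restrict_iff' measurableSet_Icc).2 (ae_of_all _ hg_nonneg)),
      integral_Icc_eq_integral_Ioc, ← intervalIntegral.integral_of_le (by linarith),
      integral_posNegVolume_sub_posPart_sub_negPart n ha hb]

lemma posNegVolume_self (n : ℕ) (a : ℝ) :
    posNegVolume n a a = a ^ n / n ! * ∑ k ∈ range (n + 1), (n.choose k : ℝ) ^ 2 := by
  rw [posNegVolume, Nat.sum_antidiagonal_eq_sum_range_succ_mk, mul_sum]
  refine sum_congr rfl fun k hk => ?_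
  have hk : k ≤ n := Nat.lt_succ_iff.1 (mem_range.1 hk)
  have hfac : (n.choose k : ℝ) * k ! * (n - k)! = n ! := by
    exact_mod_cast Nat.choose_mul_factorial_mul_factorial hk
  rw [← hfac, ← pow_mul_pow_sub a hk]
  field_simp

lemma four_pow_mul_div_le_posNegVolume_self (n : ℕ) {a : ℝ} (ha : 0 ≤ a) :
    4 ^ n * a ^ n / (n + 1)! ≤ posNegVolume n a a := by
  have hcs := sq_sum_le_card_mul_sum_sq (s := range (n + 1)) (f := fun k => (n.choose k : ℝ))
  rw [← Nat.cast_sum, Nat.sum_range_choose, card_range] at hcs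
  rw [posNegVolume_self, Nat.factorial_succ]
  push_cast at hcs ⊢
  rw [div_mul_eq_mul_div, div_le_div_iff₀ (by positivity) (by positivity),
    show (4 : ℝ) ^ n = (2 ^ n) ^ 2 by rw [← pow_mul, mul_comm, pow_mul]; norm_num]
  linarith [mul_le_mul_of_nonneg_right hcs (by positivity : (0 : ℝ) ≤ a ^ n * n !)]

lemma setOf_sum_abs_add_abs_sum_le (n : ℕ) (t : ℝ) :
    {w : Fin n → ℝ | ∑ i, |w i| + |∑ i, w i| ≤ t} = posNegBody n (t / 2) (t / 2) := by
  ext w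
  have habs : ∑ i, |w i| = ∑ i, (w i)⁺ + ∑ i, (w i)⁻ := by
    simp only [← sum_add_distrib, posPart_add_negPart]
  have hsum : ∑ i, w i = ∑ i, (w i)⁺ - ∑ i, (w i)⁻ := by
    simp only [← sum_sub_distrib, posPart_sub_negPart]
  simp only [Set.mem_ofPred_eq, posNegBody, habs, hsum]
  set P := ∑ i, (w i)⁺
  set N := ∑ i, (w i)⁻
  constructor
  · intro h
    constructor <;> linarith [le_abs_self (P - N), neg_le_abs (P - N)]
  · rintro ⟨hP, hN⟩
    rcases abs_cases (P - N) with ⟨h, -⟩ | ⟨h, -⟩ <;> rw [h] <;> linarith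

lemma convexOn_sum_abs_add_abs_sum (n : ℕ) :
    ConvexOn ℝ Set.univ fun w : Fin n → ℝ => ∑ i, |w i| + |∑ i, w i| := by
  have habs (ℓ : (Fin n → ℝ) →ₗ[ℝ] ℝ) : ConvexOn ℝ Set.univ fun w => |ℓ w| :=
    (convexOn_norm convex_univ).comp_linearMap ℓ
  refine ConvexOn.add ?_ (by simpa using habs (∑ i, LinearMap.proj i))
  have := sum_induction (s := univ) (fun (i : Fin n) (w : Fin n → ℝ) => |w i|)
    (ConvexOn ℝ Set.univ) (fun _ _ => ConvexOn.add) (convexOn_const 0 convex_univ)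
    fun i _ => habs (LinearMap.proj i)
  simpa only [Finset.sum_fn] using this

lemma isCompact_setOf_sum_abs_add_abs_sum_le (n : ℕ) (t : ℝ) :
    IsCompact {w : Fin n → ℝ | ∑ i, |w i| + |∑ i, w i| ≤ t} := by
  refine (isCompact_Icc (a := fun _ => -t) (b := fun _ => t)).of_isClosed_subset
    (isClosed_le (by fun_prop) (by fun_prop)) fun w hw => ?_
  have hi (i : Fin n) : |w i| ≤ t := by
    have := single_le_sum (fun j _ => abs_nonneg (w j)) (mem_univ i)
    linarith [abs_nonneg (∑ i, w i), hw.out]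
  exact ⟨fun i => neg_le_of_abs_le (hi i), fun i => le_of_abs_le (hi i)⟩

lemma exists_ne_zero_int_mulVec_mem {n : ℕ} [NeZero n] {A : Matrix (Fin n) (Fin n) ℝ}
    (hA : A.det ≠ 0) {C : Set (Fin n → ℝ)} (h_symm : ∀ x ∈ C, -x ∈ C) (h_conv : Convex ℝ C)
    (h_cpt : IsCompact C) (h_vol : ENNReal.ofReal (2 ^ n * |A.det|) ≤ volume C) :
    ∃ z : Fin n → ℤ, z ≠ 0 ∧ A *ᵥ (fun i => (z i : ℝ)) ∈ C := by
  let f := Matrix.toLin' A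
  have hf : LinearMap.det f ≠ 0 := by rwa [LinearMap.det_toLin']
  let b := Pi.basisFun ℝ (Fin n)
  let L := Submodule.span ℤ (Set.range b)
  have : Countable L.toAddSubgroup := inferInstanceAs (Countable L)
  have : DiscreteTopology L.toAddSubgroup := inferInstanceAs (DiscreteTopology L)
  have h_vol' : volume (ZSpan.fundamentalDomain b) * 2 ^ Module.finrank ℝ (Fin n → ℝ) ≤
      volume (f ⁻¹' C) := by
    rw [ZSpan.fundamentalDomain_pi_basisFun, Measure.addHaar_preimage_linearMap _ hf,
      LinearMap.det_toLin', Module.finrank_fin_fun]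
    simp only [Real.volume_pi_Ico, sub_zero, ENNReal.ofReal_one, prod_const_one, one_mul]
    calc (2 : ENNReal) ^ n = ENNReal.ofReal |A.det⁻¹| * ENNReal.ofReal (2 ^ n * |A.det|) := by
          rw [abs_inv, ← ENNReal.ofReal_mul (by positivity), mul_left_comm,
            inv_mul_cancel₀ (abs_ne_zero.2 hA), mul_one]
          simp
      _ ≤ _ := by gcongr
  have h_cpt' : IsCompact (f ⁻¹' C) :=
    (f.equivOfDetNeZero hf).toContinuousLinearEquiv.toHomeomorph.isCompact_preimage.2 h_cpt
  obtain ⟨x, hx0, hxC⟩ := exists_ne_zero_mem_lattice_of_measure_mul_two_pow_le_measure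
    (ZSpan.isAddFundamentalDomain' b volume) (fun x hx => by simpa using h_symm _ hx)
    (h_conv.linear_preimage f) h_cpt' h_vol'
  choose z hz using (b.mem_span_iff_repr_mem ℤ x).1 x.2
  have hxz : (x : Fin n → ℝ) = fun i => (z i : ℝ) := funext fun i => (hz i).symm
  refine ⟨z, fun h => hx0 (Subtype.ext (hxz.trans (funext fun i => by simp [h]))), ?_⟩
  rw [← hxz]
  exact hxC

/-- **Linear form theorem in general dimension.**
Given `n ≥ 1` linear homogeneous forms `ℓ_i(x) = a_i·x` whose coefficient matrix `A`
(with rows `a_1, …, a_n`) has nonzero determinant, there exists a nonzero integral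
vector `x` with `∑ |ℓ_i(x)| + |∑ ℓ_i(x)| ≤ ((n+1)!·|det A|)^{1/n}`. -/
theorem linear_forms_general (n : ℕ) (hn : 1 ≤ n) (A : Matrix (Fin n) (Fin n) ℝ)
    (hA : A.det ≠ 0) :
    ∃ x : Fin n → ℤ, x ≠ 0 ∧
      (∑ i, |∑ j, A i j * (x j : ℝ)|) + |∑ i, ∑ j, A i j * (x j : ℝ)| ≤
        ((Nat.factorial (n + 1) : ℝ) * |A.det|) ^ ((1 : ℝ) / n) := by
  have : NeZero n := ⟨by omega⟩
  set t := ((Nat.factorial (n + 1) : ℝ) * |A.det|) ^ ((1 : ℝ) / n)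
  have ht_pow : t ^ n = (n + 1)! * |A.det| := by
    rw [← Real.rpow_natCast, ← Real.rpow_mul (by positivity),
      one_div_mul_cancel (by positivity), Real.rpow_one]
  have hvol : ENNReal.ofReal (2 ^ n * |A.det|) ≤
      volume {w : Fin n → ℝ | ∑ i, |w i| + |∑ i, w i| ≤ t} := by
    rw [setOf_sum_abs_add_abs_sum_le, volume_posNegBody n (by positivity) (by positivity)]
    refine ENNReal.ofReal_le_ofReal (le_of_eq_of_le ?_
      (four_pow_mul_div_le_posNegVolume_self n (by positivity)))
    rw [div_pow, ht_pow, show (4 : ℝ) ^ n = 2 ^ n * 2 ^ n by rw [← mul_pow]; norm_num]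
    field_simp
  exact exists_ne_zero_int_mulVec_mem hA (fun w hw => by simpa [sum_neg_distrib] using hw)
    (by simpa using (convexOn_sum_abs_add_abs_sum n).convex_le t)
    (isCompact_setOf_sum_abs_add_abs_sum_le n t) hvol
end

section
/- Let a_1, a_2 ∈ ℝ^2 be such that the matrix A with rows a_1, a_2 satisfies det(A) ≠ 0. Then there exists a non-zero integral vector x ∈ ℤ^2 \ {0} such that |a_1·x| + |a_2·x| + |a_1·x + a_2·x| ≤ (4/√3) · |det(A)|^{1/2}. -/
open MeasureTheory Submodule

lemma slice_eq (r x : ℝ) :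
    {y : ℝ | |x| ≤ r ∧ |y| ≤ r ∧ |x + y| ≤ r} =
      if |x| ≤ r then Set.Icc (max (-r) (-r - x)) (min r (r - x)) else ∅ := by
  split_ifs with h
  · ext y
    simp only [Set.mem_setOf_eq, Set.mem_Icc, abs_le, max_le_iff, le_min_iff]
    constructor
    · rintro ⟨-, ⟨h1, h2⟩, h3, h4⟩
      exact ⟨⟨by linarith, by linarith⟩, by linarith, by linarith⟩
    · rintro ⟨⟨h1, h2⟩, h3, h4⟩
      exact ⟨abs_le.mp h, ⟨by linarith, by linarith⟩, by linarith, by linarith⟩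
  · ext y; simp only [Set.mem_setOf_eq, Set.mem_empty_iff_false, iff_false]
    tauto

lemma abs_integral (r : ℝ) (hr : 0 < r) : ∫ x in (-r)..r, |x| = r ^ 2 := by
  have hi1 : IntervalIntegrable (fun x : ℝ => |x|) volume (-r) 0 :=
    (continuous_abs).intervalIntegrable _ _
  have hi2 : IntervalIntegrable (fun x : ℝ => |x|) volume 0 r :=
    (continuous_abs).intervalIntegrable _ _
  rw [← intervalIntegral.integral_add_adjacent_intervals hi1 hi2]
  have h1 : ∫ x in (-r)..(0:ℝ), |x| = ∫ x in (-r)..(0:ℝ), -x := by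
    apply intervalIntegral.integral_congr
    intro x hx
    rw [Set.uIcc_of_le (by linarith)] at hx
    exact abs_of_nonpos hx.2
  have h2 : ∫ x in (0:ℝ)..r, |x| = ∫ x in (0:ℝ)..r, x := by
    apply intervalIntegral.integral_congr
    intro x hx
    rw [Set.uIcc_of_le (by linarith)] at hx
    exact abs_of_nonneg hx.1
  rw [h1, h2, intervalIntegral.integral_neg, integral_id, integral_id]
  ring

lemma hexagon_volume (r : ℝ) (hr : 0 < r) :
    volume {p : ℝ × ℝ | |p.1| ≤ r ∧ |p.2| ≤ r ∧ |p.1 + p.2| ≤ r} =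
      ENNReal.ofReal (3 * r ^ 2) := by
  have hmeas : MeasurableSet {p : ℝ × ℝ | |p.1| ≤ r ∧ |p.2| ≤ r ∧ |p.1 + p.2| ≤ r} := by
    apply MeasurableSet.inter
    · exact measurableSet_le measurable_fst.abs measurable_const
    apply MeasurableSet.inter
    · exact measurableSet_le measurable_snd.abs measurable_const
    · exact measurableSet_le (measurable_fst.add measurable_snd).abs measurable_const
  rw [show (volume : Measure (ℝ × ℝ)) = (volume : Measure ℝ).prod volume from rfl]
  rw [Measure.prod_apply hmeas]
  have key : ∀ x : ℝ, volume (Prod.mk x ⁻¹' {p : ℝ × ℝ | |p.1| ≤ r ∧ |p.2| ≤ r ∧ |p.1 + p.2| ≤ r})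
      = Set.indicator (Set.Icc (-r) r) (fun x => ENNReal.ofReal (2 * r - |x|)) x := by
    intro x
    have : Prod.mk x ⁻¹' {p : ℝ × ℝ | |p.1| ≤ r ∧ |p.2| ≤ r ∧ |p.1 + p.2| ≤ r}
        = {y : ℝ | |x| ≤ r ∧ |y| ≤ r ∧ |x + y| ≤ r} := rfl
    rw [this, slice_eq r x]
    by_cases h : |x| ≤ r
    · rw [if_pos h, Real.volume_Icc,
        Set.indicator_of_mem (Set.mem_Icc.mpr (abs_le.mp h))]
      congr 1
      rcases abs_cases x with ⟨he, hs⟩ | ⟨he, hs⟩ <;>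
        · rw [he]
          rw [min_def, max_def]
          rcases abs_le.mp h with ⟨g1, g2⟩
          split_ifs <;> linarith
    · rw [if_neg h, Set.indicator_of_notMem (by rwa [Set.mem_Icc, ← abs_le])]
      simp
  simp_rw [key]
  rw [lintegral_indicator measurableSet_Icc]
  rw [← ofReal_integral_eq_lintegral_ofReal]
  · congr 1
    rw [integral_Icc_eq_integral_Ioc, ← intervalIntegral.integral_of_le (by linarith)]
    rw [intervalIntegral.integral_sub (intervalIntegrable_const)
      ((continuous_abs).intervalIntegrable _ _)]
    rw [abs_integral r hr, intervalIntegral.integral_const]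
    simp only [smul_eq_mul]
    ring
  · apply ContinuousOn.integrableOn_compact isCompact_Icc
    exact (continuous_const.sub continuous_abs).continuousOn
  · filter_upwards [ae_restrict_mem measurableSet_Icc] with x hx
    rw [Set.mem_Icc, ← abs_le] at hx
    simp only [Pi.zero_apply]
    linarith

/-- **Sharp linear form theorem in the plane.**
Given two linear homogeneous forms `ℓ_i(x) = a_i·x` on `ℝ²` whose coefficient matrix `A`
(with rows `a_1, a_2`) has nonzero determinant, there exists a nonzero integral vector `x`
with `|ℓ_1(x)| + |ℓ_2(x)| + |ℓ_1(x)+ℓ_2(x)| ≤ (4/√3)·|det A|^{1/2}`. -/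
theorem linear_forms_dim_two (A : Matrix (Fin 2) (Fin 2) ℝ) (hA : A.det ≠ 0) :
    ∃ x : Fin 2 → ℤ, x ≠ 0 ∧
      |∑ j, A 0 j * (x j : ℝ)| + |∑ j, A 1 j * (x j : ℝ)| +
        |(∑ j, A 0 j * (x j : ℝ)) + ∑ j, A 1 j * (x j : ℝ)| ≤
        4 / Real.sqrt 3 * Real.sqrt |A.det| := by
  classical
  set d := |A.det| with hd
  have hd0 : 0 < d := abs_pos.mpr hA
  set r : ℝ := 2 * Real.sqrt (d / 3) with hrdef
  have hr0 : 0 < r := by positivity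
  have hr2 : 3 * r ^ 2 = 4 * d := by
    rw [hrdef, mul_pow, Real.sq_sqrt (by positivity)]; ring
  set f : (Fin 2 → ℝ) →ₗ[ℝ] (Fin 2 → ℝ) := Matrix.toLin' A with hf
  have hdetf : LinearMap.det f ≠ 0 := by rw [hf, LinearMap.det_toLin']; exact hA
  have hfapp : ∀ y : Fin 2 → ℝ, ∀ i, f y i = ∑ j, A i j * y j := by
    intro y i
    simp [hf, Matrix.toLin'_apply, Matrix.mulVec, dotProduct]
  set H : Set (Fin 2 → ℝ) := {u | |u 0| ≤ r ∧ |u 1| ≤ r ∧ |u 0 + u 1| ≤ r} with hH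
  set S : Set (Fin 2 → ℝ) := f ⁻¹' H with hSdef
  -- volume of H
  have hvolH : volume H = ENNReal.ofReal (3 * r ^ 2) := by
    have hpre : H = (MeasurableEquiv.finTwoArrow : (Fin 2 → ℝ) ≃ᵐ ℝ × ℝ) ⁻¹'
        {p : ℝ × ℝ | |p.1| ≤ r ∧ |p.2| ≤ r ∧ |p.1 + p.2| ≤ r} := rfl
    have hmeas' : MeasurableSet {p : ℝ × ℝ | |p.1| ≤ r ∧ |p.2| ≤ r ∧ |p.1 + p.2| ≤ r} := by
      apply MeasurableSet.inter
      · exact measurableSet_le measurable_fst.abs measurable_const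
      apply MeasurableSet.inter
      · exact measurableSet_le measurable_snd.abs measurable_const
      · exact measurableSet_le (measurable_fst.add measurable_snd).abs measurable_const
    rw [hpre, (volume_preserving_finTwoArrow ℝ).measure_preimage hmeas'.nullMeasurableSet,
      hexagon_volume r hr0]
  -- volume of S
  have hvolS : volume S = ENNReal.ofReal 4 := by
    rw [hSdef, Measure.addHaar_preimage_linearMap volume hdetf, hvolH,
      ← ENNReal.ofReal_mul (abs_nonneg _)]
    congr 1
    rw [hf, LinearMap.det_toLin', abs_inv, ← hd, hr2]
    field_simp
  -- convexity
  have hHconv : Convex ℝ H := by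
    intro u hu v hv a b ha hb hab
    obtain ⟨hu1, hu2, hu3⟩ := hu
    obtain ⟨hv1, hv2, hv3⟩ := hv
    have key : ∀ (p q : ℝ), |p| ≤ r → |q| ≤ r → |a * p + b * q| ≤ r := by
      intro p q hp hq
      calc |a * p + b * q| ≤ |a * p| + |b * q| := abs_add_le _ _
        _ = a * |p| + b * |q| := by rw [abs_mul, abs_mul, abs_of_nonneg ha, abs_of_nonneg hb]
        _ ≤ a * r + b * r := by
            apply add_le_add <;> apply mul_le_mul_of_nonneg_left <;> assumption
        _ = r := by rw [← add_mul, hab, one_mul]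
    refine ⟨?_, ?_, ?_⟩
    · simpa using key (u 0) (v 0) hu1 hv1
    · simpa using key (u 1) (v 1) hu2 hv2
    · have := key (u 0 + u 1) (v 0 + v 1) hu3 hv3
      simp only [Pi.add_apply, Pi.smul_apply, smul_eq_mul]
      convert this using 2
      ring
  have hSconv : Convex ℝ S := hHconv.linear_preimage f
  -- symmetry
  have hSsymm : ∀ x ∈ S, -x ∈ S := by
    intro x hx
    obtain ⟨h1, h2, h3⟩ := hx
    refine ⟨?_, ?_, ?_⟩ <;> simp only [Set.mem_preimage, map_neg, Pi.neg_apply] at *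
    · rwa [abs_neg]
    · rwa [abs_neg]
    · rwa [show -f x 0 + -f x 1 = -(f x 0 + f x 1) by ring, abs_neg]
  -- compactness
  have hHcpt : IsCompact H := by
    have hclosed : IsClosed H := by
      apply IsClosed.inter
      · exact isClosed_le ((continuous_apply 0).abs) continuous_const
      apply IsClosed.inter
      · exact isClosed_le ((continuous_apply 1).abs) continuous_const
      · exact isClosed_le (((continuous_apply 0).add (continuous_apply 1)).abs) continuous_const
    have hbdd : Bornology.IsBounded H := by
      apply (Metric.isBounded_closedBall (x := (0 : Fin 2 → ℝ)) (r := r)).subset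
      intro u hu
      rw [Metric.mem_closedBall, dist_zero_right]
      rw [pi_norm_le_iff_of_nonneg hr0.le]
      intro i
      fin_cases i
      · exact hu.1
      · exact hu.2.1
    exact Metric.isCompact_of_isClosed_isBounded hclosed hbdd
  have hScpt : IsCompact S := by
    set e := LinearMap.equivOfDetNeZero f hdetf with he
    have hcoe : S = ⇑e.symm '' H := by
      rw [LinearEquiv.image_symm_eq_preimage]
      rfl
    rw [hcoe]
    exact hHcpt.image (LinearMap.continuous_of_finiteDimensional (e.symm : (Fin 2 → ℝ) →ₗ[ℝ] (Fin 2 → ℝ)))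
  -- lattice setup
  set b := Pi.basisFun ℝ (Fin 2) with hb
  have fund := ZSpan.isAddFundamentalDomain' b volume
  have hvolF : volume (ZSpan.fundamentalDomain b) = 1 := by
    rw [hb, ZSpan.fundamentalDomain_pi_basisFun, volume_pi, Measure.pi_pi, Real.volume_Ico]
    simp
  haveI : Countable (span ℤ (Set.range ⇑b)).toAddSubgroup :=
    (inferInstance : Countable (span ℤ (Set.range ⇑b)))
  -- Minkowski
  obtain ⟨x, hxne, hxmem⟩ :=
    exists_ne_zero_mem_lattice_of_measure_mul_two_pow_le_measure fund hSsymm hSconv hScpt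
      (by
        rw [hvolF, hvolS, one_mul]
        norm_num [Module.finrank_fintype_fun_eq_card])
  -- extract integer coordinates
  have hmem := (b.mem_span_iff_repr_mem ℤ (x : Fin 2 → ℝ)).mp (SetLike.coe_mem _)
  choose z hz using hmem
  have hz' : ∀ i, ((z i : ℝ)) = (x : Fin 2 → ℝ) i := by
    intro i
    have := hz i
    simpa [hb, Pi.basisFun_repr] using this
  refine ⟨z, ?_, ?_⟩
  · intro h0
    apply hxne
    have : (x : Fin 2 → ℝ) = 0 := by
      funext i
      rw [← hz' i, h0]
      simp
    exact_mod_cast Subtype.ext this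
  · have hmemS : f (x : Fin 2 → ℝ) ∈ H := hxmem
    obtain ⟨h1, h2, h3⟩ := hmemS
    rw [hfapp] at h1 h2
    rw [hfapp, hfapp] at h3
    simp_rw [← hz'] at h1 h2 h3
    have hbound : (4 : ℝ) / Real.sqrt 3 * Real.sqrt d = 2 * r := by
      rw [hrdef, Real.sqrt_div (le_of_lt hd0)]
      have h3' : Real.sqrt 3 ≠ 0 := by positivity
      field_simp
      ring
    rw [hbound]
    rcases abs_le.mp h1 with ⟨a1, a2⟩
    rcases abs_le.mp h2 with ⟨b1, b2⟩
    rcases abs_le.mp h3 with ⟨c1, c2⟩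
    rcases abs_cases (∑ j, A 0 j * (z j : ℝ)) with ⟨e1, s1⟩ | ⟨e1, s1⟩ <;>
      rcases abs_cases (∑ j, A 1 j * (z j : ℝ)) with ⟨e2, s2⟩ | ⟨e2, s2⟩ <;>
        rcases abs_cases ((∑ j, A 0 j * (z j : ℝ)) + ∑ j, A 1 j * (z j : ℝ)) with
          ⟨e3, s3⟩ | ⟨e3, s3⟩ <;>
      rw [e1, e2, e3] <;> linarith
end

section
/- For 1 ≤ i ≤ n and 1 ≤ j ≤ n, the covering minima of the polytope P_{n,i} with respect to ℤ^n are: μ_j(P_{n,i}) = 1/2 if j ≤ i, and μ_j(P_{n,i}) = j/(2i) if j > i. In particular, μ_i(C_n) = 1/2 and μ_i(C_n^⋆) = i/2 for all i ∈ {1, …, n}. -/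
open MeasureTheory Pointwise

/-- The integer lattice `ℤⁿ` viewed as a subset of `ℝⁿ`. -/
def intLattice (n : ℕ) : Set (EuclideanSpace ℝ (Fin n)) :=
  {x | ∀ j, ∃ m : ℤ, x j = (m : ℝ)}

/-- The `i`-th covering minimum `μ_i(K, ℤⁿ)` of a convex body `K ⊆ ℝⁿ`:
the least `μ > 0` such that `μK + ℤⁿ` meets every `(n-i)`-dimensional affine subspace. -/
noncomputable def covMin (n i : ℕ) (K : Set (EuclideanSpace ℝ (Fin n))) : ℝ :=
  sInf {μ : ℝ | 0 < μ ∧ ∀ L : AffineSubspace ℝ (EuclideanSpace ℝ (Fin n)),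
    (L : Set (EuclideanSpace ℝ (Fin n))).Nonempty →
    Module.finrank ℝ L.direction = n - i →
    ((μ • K + intLattice n) ∩ (L : Set (EuclideanSpace ℝ (Fin n)))).Nonempty}

/-- The cube `C_n = [-1,1]ⁿ`. -/
def cube (n : ℕ) : Set (EuclideanSpace ℝ (Fin n)) := {x | ∀ j, |x j| ≤ 1}

/-- The crosspolytope `C_n^⋆ = conv{±e_1, …, ±e_n}`. -/
def crosspolytope (n : ℕ) : Set (EuclideanSpace ℝ (Fin n)) := {x | ∑ j, |x j| ≤ 1}

/-- The polytope `P_{n,i} = C_n ∩ i·C_n^⋆`, interpolating between crosspolytope and cube. -/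
noncomputable def Pcc (n i : ℕ) : Set (EuclideanSpace ℝ (Fin n)) :=
  cube n ∩ (i : ℝ) • crosspolytope n

/-!
Let `V` be the direction of a flat `L` of dimension `n - j`. Some at most `j` standard basis
vectors span `ℝⁿ` together with `V`, so moving a point of `L` inside `L` makes all its other
coordinates integers; subtracting the nearest lattice point leaves a vector with at most `j`
nonzero coordinates, each of size at most `1/2`, i.e. a point of `½ P_{n,j}`. Hence
`μ_j(P_{n,j}) ≤ 1/2`, and the other upper bounds follow from `P_{n,j} ⊆ c P_{n,i}`.
Conversely, `1/2` is at distance `1/2` from `ℤ`, so if `μK + ℤⁿ` meets the flat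
`{x | x_k = 1/2 for k ∈ S}` with `|S| = j`, then some `y ∈ μK` has `|y_k| ≥ 1/2` for all
`k ∈ S`. This forces `μ ≥ 1/2` if `K ⊆ C_n`, and `μ i ≥ j/2` if `K ⊆ i C_n^⋆`.
-/

open Module Submodule

theorem Submodule.exists_finset_card_le_sup_span_basis_eq_top {K E ι : Type*} [DivisionRing K]
    [AddCommGroup E] [Module K E] [Fintype ι] (b : Basis ι K E) (V : Submodule K E) :
    ∃ s : Finset ι, s.card ≤ finrank K E - finrank K V ∧ V ⊔ span K (b '' s) = ⊤ := by
  classical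
  have : Module.Finite K E := Module.Finite.of_basis b
  -- `s` indexes basis vectors whose images form a basis of `E ⧸ V`.
  obtain ⟨s, -, -, hspan, hind⟩ := exists_linearIndepOn_extension (v := V.mkQ ∘ b)
    (linearIndepOn_empty K _) (Set.empty_subset Set.univ)
  refine ⟨s.toFinset, ?_, ?_⟩
  · rw [← V.finrank_quotient_add_finrank, Nat.add_sub_cancel, Set.toFinset_card]
    exact hind.fintype_card_le_finrank
  · rw [← map_mkQ_eq_top, ← span_image, Set.coe_toFinset, ← Set.image_comp, eq_top_iff]
    calc ⊤ = map V.mkQ (span K (Set.range b)) := by rw [b.span_eq, map_top, range_mkQ]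
      _ = span K ((V.mkQ ∘ b) '' Set.univ) := by rw [Set.image_univ, Set.range_comp, span_image]
      _ ≤ _ := span_le.mpr hspan

lemma EuclideanSpace.apply_eq_zero_of_mem_span_basisFun {n : ℕ} {s : Set (Fin n)}
    {t : EuclideanSpace ℝ (Fin n)} (ht : t ∈ span ℝ (PiLp.basisFun 2 ℝ (Fin n) '' s))
    {k : Fin n} (hk : k ∉ s) : t k = 0 := by
  rw [Basis.mem_span_image] at ht
  have : (PiLp.basisFun 2 ℝ (Fin n)).repr t k = 0 :=
    Finsupp.notMem_support_iff.mp fun h => hk (ht h)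
  rwa [PiLp.basisFun_repr] at this

lemma AffineSubspace.exists_mem_apply_eq_intCast_of_notMem
    {n : ℕ} (L : AffineSubspace ℝ (EuclideanSpace ℝ (Fin n)))
    (hL : (L : Set (EuclideanSpace ℝ (Fin n))).Nonempty) :
    ∃ x ∈ L, ∃ s : Finset (Fin n), s.card ≤ n - finrank ℝ L.direction ∧
      ∀ k ∉ s, ∃ m : ℤ, x k = m := by
  obtain ⟨p, hp⟩ := hL
  obtain ⟨s, hs, htop⟩ := exists_finset_card_le_sup_span_basis_eq_top
    (PiLp.basisFun 2 ℝ (Fin n)) L.direction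
  rw [finrank_euclideanSpace_fin] at hs
  -- Write `round p - p = v + t` with `v ∈ V` and `t` supported on `s`; then `v +ᵥ p` works.
  obtain ⟨v, hv, t, ht, hvt⟩ :=
    mem_sup.mp (htop ▸ Submodule.mem_top (x := WithLp.toLp 2 (fun k => (round (p k) : ℝ)) - p))
  refine ⟨v +ᵥ p, AffineSubspace.vadd_mem_of_mem_direction hv hp, s, hs, fun k hk => ?_⟩
  refine ⟨round (p k), ?_⟩
  have := congrArg (· k) hvt
  simp only [PiLp.add_apply, PiLp.sub_apply,
    EuclideanSpace.apply_eq_zero_of_mem_span_basisFun ht hk] at this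
  rw [vadd_eq_add, PiLp.add_apply]
  linarith

lemma sum_abs_sub_round_le_card_div_two {ι : Type*} [Fintype ι] (f : ι → ℝ) (s : Finset ι)
    (hs : ∀ k ∉ s, ∃ m : ℤ, f k = m) : ∑ k, |f k - round (f k)| ≤ s.card / 2 := by
  rw [← Finset.sum_subset (Finset.subset_univ s) fun k _ hk => ?_]
  · calc ∑ k ∈ s, |f k - round (f k)| ≤ s.card • (1 / 2 : ℝ) :=
          Finset.sum_le_card_nsmul _ _ _ fun k _ => abs_sub_round (f k)
      _ = s.card / 2 := by rw [nsmul_eq_mul]; ring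
  · obtain ⟨m, hm⟩ := hs k hk
    rw [hm, round_intCast, sub_self, abs_zero]

lemma half_le_abs_half_sub_intCast (m : ℤ) : 1 / 2 ≤ |1 / 2 - (m : ℝ)| := by
  rcases le_or_gt m 0 with hm | hm
  · have : (m : ℝ) ≤ 0 := by exact_mod_cast hm
    rw [abs_of_nonneg (by linarith)]
    linarith
  · have : (1 : ℝ) ≤ m := by exact_mod_cast hm
    rw [abs_of_nonpos (by linarith)]
    linarith

section Polytopes

variable {n : ℕ} {c : ℝ} {y : EuclideanSpace ℝ (Fin n)}

lemma mem_smul_cube (hc : 0 < c) : y ∈ c • cube n ↔ ∀ k, |y k| ≤ c := by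
  simp only [Set.mem_smul_set_iff_inv_smul_mem₀ hc.ne', cube, Set.mem_ofPred_eq, PiLp.smul_apply,
    smul_eq_mul, abs_mul, abs_inv, abs_of_pos hc, inv_mul_le_iff₀ hc, mul_one]

lemma mem_smul_crosspolytope (hc : 0 < c) : y ∈ c • crosspolytope n ↔ ∑ k, |y k| ≤ c := by
  simp only [Set.mem_smul_set_iff_inv_smul_mem₀ hc.ne', crosspolytope, Set.mem_ofPred_eq,
    PiLp.smul_apply, smul_eq_mul, abs_mul, abs_inv, abs_of_pos hc, ← Finset.mul_sum,
    inv_mul_le_iff₀ hc, mul_one]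

lemma mem_smul_Pcc {i : ℕ} (hc : 0 < c) (hi : 0 < i) :
    y ∈ c • Pcc n i ↔ (∀ k, |y k| ≤ c) ∧ ∑ k, |y k| ≤ c * i := by
  rw [Pcc, Set.smul_set_inter₀ hc.ne', smul_smul, Set.mem_inter_iff, mem_smul_cube hc,
    mem_smul_crosspolytope (by positivity)]

lemma mem_Pcc {i : ℕ} (hi : 0 < i) :
    y ∈ Pcc n i ↔ (∀ k, |y k| ≤ 1) ∧ ∑ k, |y k| ≤ i := by
  rw [← one_smul ℝ (Pcc n i), mem_smul_Pcc one_pos hi, one_mul]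

lemma Pcc_self (hn : 0 < n) : Pcc n n = cube n := by
  ext y
  change _ ↔ ∀ k, |y k| ≤ 1
  rw [mem_Pcc hn, and_iff_left_iff_imp]
  intro hy
  simpa using Finset.sum_le_card_nsmul Finset.univ (fun k => |y k|) 1 fun k _ => hy k

lemma Pcc_one : Pcc n 1 = crosspolytope n := by
  ext y
  change _ ↔ ∑ k, |y k| ≤ 1
  rw [mem_Pcc one_pos, Nat.cast_one, and_iff_right_iff_imp]
  exact fun hy k =>
    (Finset.single_le_sum (fun k _ => abs_nonneg (y k)) (Finset.mem_univ k)).trans hy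

end Polytopes

def MeetsAllFlats (n j : ℕ) (K : Set (EuclideanSpace ℝ (Fin n))) (μ : ℝ) : Prop :=
  ∀ L : AffineSubspace ℝ (EuclideanSpace ℝ (Fin n)),
    (L : Set (EuclideanSpace ℝ (Fin n))).Nonempty → finrank ℝ L.direction = n - j →
    ((μ • K + intLattice n) ∩ (L : Set (EuclideanSpace ℝ (Fin n)))).Nonempty

section MeetsAllFlats

variable {n j : ℕ} {K : Set (EuclideanSpace ℝ (Fin n))} {μ : ℝ}

lemma covMin_eq_of_meetsAllFlats (hμ : 0 < μ) (hK : MeetsAllFlats n j K μ)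
    (hmin : ∀ ν, 0 < ν → MeetsAllFlats n j K ν → μ ≤ ν) : covMin n j K = μ :=
  IsLeast.csInf_eq ⟨⟨hμ, hK⟩, fun ν hν => hmin ν hν.1 hν.2⟩

lemma MeetsAllFlats.mono {K' : Set (EuclideanSpace ℝ (Fin n))} {ν : ℝ}
    (hK : MeetsAllFlats n j K μ) (hKK' : μ • K ⊆ ν • K') : MeetsAllFlats n j K' ν :=
  fun L hL hd => (hK L hL hd).mono (Set.inter_subset_inter_left _ (Set.add_subset_add_right hKK'))

lemma meetsAllFlats_half_Pcc (hj : 0 < j) : MeetsAllFlats n j (Pcc n j) (1 / 2) := by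
  intro L hL hd
  obtain ⟨x, hxL, s, hs, hint⟩ := L.exists_mem_apply_eq_intCast_of_notMem hL
  set z : EuclideanSpace ℝ (Fin n) := WithLp.toLp 2 fun k => (round (x k) : ℝ)
  refine ⟨x, ⟨x - z, ?_, z, fun k => ⟨round (x k), rfl⟩, sub_add_cancel x z⟩, hxL⟩
  have hsj : (s.card : ℝ) ≤ j := by exact_mod_cast (by omega : s.card ≤ j)
  rw [mem_smul_Pcc one_half_pos hj]
  refine ⟨fun k => abs_sub_round (x k), ?_⟩
  calc ∑ k, |(x - z) k| ≤ s.card / 2 := sum_abs_sub_round_le_card_div_two (fun k => x k) s hint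
    _ ≤ 1 / 2 * j := by linarith

lemma MeetsAllFlats.exists_half_le_abs (hK : MeetsAllFlats n j K μ) (S : Finset (Fin n))
    (hS : S.card = j) : ∃ y ∈ μ • K, ∀ k ∈ S, 1 / 2 ≤ |y k| := by
  let b := PiLp.basisFun 2 ℝ (Fin n)
  let L :=
    AffineSubspace.mk' (WithLp.toLp 2 fun _ : Fin n => (1 / 2 : ℝ)) (span ℝ (b '' ↑Sᶜ))
  have hdim : finrank ℝ L.direction = n - j := by
    rw [AffineSubspace.direction_mk', ← Subtype.range_coe (s := (↑Sᶜ : Set (Fin n))),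
      ← Set.range_comp, finrank_span_eq_card (b.linearIndependent.comp _ Subtype.val_injective)]
    simp [hS]
  obtain ⟨x, ⟨_, ⟨y, hy, rfl⟩, z, hz, rfl⟩, hxL⟩ :=
    hK L ⟨_, AffineSubspace.self_mem_mk' _ _⟩ hdim
  refine ⟨μ • y, Set.smul_mem_smul_set hy, fun k hk => ?_⟩
  obtain ⟨m, hm⟩ := hz k
  have hk' : (μ • y + z - WithLp.toLp 2 fun _ : Fin n => (1 / 2 : ℝ)) k = 0 :=
    EuclideanSpace.apply_eq_zero_of_mem_span_basisFun (AffineSubspace.mem_mk'.mp hxL)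
      (by simp [hk])
  simp only [PiLp.sub_apply, PiLp.add_apply, hm] at hk'
  simpa [show (μ • y) k = 1 / 2 - m by linarith] using half_le_abs_half_sub_intCast m

end MeetsAllFlats

section CovMinPcc

variable {n i j : ℕ}

lemma covMin_Pcc_of_le (hj : 0 < j) (hji : j ≤ i) (hjn : j ≤ n) :
    covMin n j (Pcc n i) = 1 / 2 := by
  have hi : 0 < i := hj.trans_le hji
  refine covMin_eq_of_meetsAllFlats one_half_pos ((meetsAllFlats_half_Pcc hj).mono ?_) ?_
  · intro y hy
    rw [mem_smul_Pcc one_half_pos hj] at hy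
    rw [mem_smul_Pcc one_half_pos hi]
    exact ⟨hy.1, hy.2.trans (by gcongr)⟩
  · intro μ hμ hK
    obtain ⟨S, -, hS⟩ :=
      Finset.exists_subset_card_eq (s := (Finset.univ : Finset (Fin n))) (by simpa using hjn)
    obtain ⟨y, hy, hyS⟩ := hK.exists_half_le_abs S hS
    obtain ⟨k, hk⟩ : S.Nonempty := Finset.card_pos.mp (hS ▸ hj)
    exact (hyS k hk).trans (((mem_smul_Pcc hμ hi).mp hy).1 k)

lemma covMin_Pcc_of_lt (hi : 0 < i) (hij : i < j) (hjn : j ≤ n) :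
    covMin n j (Pcc n i) = j / (2 * i) := by
  have hj : 0 < j := hi.trans hij
  have hc : (0 : ℝ) < j / (2 * i) := by positivity
  have hij' : (i : ℝ) ≤ j := by exact_mod_cast hij.le
  refine covMin_eq_of_meetsAllFlats hc ((meetsAllFlats_half_Pcc hj).mono ?_) ?_
  · intro y hy
    rw [mem_smul_Pcc one_half_pos hj] at hy
    rw [mem_smul_Pcc hc hi]
    refine ⟨fun k => (hy.1 k).trans ?_, hy.2.trans_eq ?_⟩
    · rw [le_div_iff₀ (by positivity)]
      linarith
    · field_simp
  · intro μ hμ hK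
    obtain ⟨S, -, hS⟩ :=
      Finset.exists_subset_card_eq (s := (Finset.univ : Finset (Fin n))) (by simpa using hjn)
    obtain ⟨y, hy, hyS⟩ := hK.exists_half_le_abs S hS
    have hsum : (j : ℝ) / 2 ≤ μ * i := calc
      (j : ℝ) / 2 = S.card • (1 / 2 : ℝ) := by rw [hS, nsmul_eq_mul]; ring
      _ ≤ ∑ k ∈ S, |y k| := Finset.card_nsmul_le_sum _ _ _ hyS
      _ ≤ ∑ k, |y k| :=
        Finset.sum_le_sum_of_subset_of_nonneg (Finset.subset_univ S) fun k _ _ => abs_nonneg _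
      _ ≤ μ * i := ((mem_smul_Pcc hμ hi).mp hy).2
    rw [div_le_iff₀ (by positivity)]
    linarith

end CovMinPcc

/-- For `1 ≤ i ≤ n` and `1 ≤ j ≤ n`, the covering minima of `P_{n,i}` satisfy
`μ_j(P_{n,i}) = 1/2` for `j ≤ i` and `μ_j(P_{n,i}) = j/(2i)` for `j > i`.
In particular, `μ_i(C_n) = 1/2` and `μ_i(C_n^⋆) = i/2`. -/
theorem covMin_Pcc (n i j : ℕ) (hi1 : 1 ≤ i) (hi2 : i ≤ n) (hj1 : 1 ≤ j) (hj2 : j ≤ n) :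
    (j ≤ i → covMin n j (Pcc n i) = 1 / 2) ∧
    (i < j → covMin n j (Pcc n i) = (j : ℝ) / (2 * i)) ∧
    covMin n i (cube n) = 1 / 2 ∧
    covMin n i (crosspolytope n) = (i : ℝ) / 2 := by
  refine ⟨fun hji => covMin_Pcc_of_le hj1 hji hj2, fun hij => covMin_Pcc_of_lt hi1 hij hj2,
    ?_, ?_⟩
  · rw [← Pcc_self (Nat.lt_of_lt_of_le hi1 hi2)]
    exact covMin_Pcc_of_le hi1 hi2 hi2
  · rw [← Pcc_one]
    rcases hi1.eq_or_lt with rfl | h1i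
    · rw [covMin_Pcc_of_le one_pos le_rfl hi2, Nat.cast_one]
    · rw [covMin_Pcc_of_lt one_pos h1i hi2, Nat.cast_one, mul_one]
end

section
/- For 1 ≤ i ≤ n, the volume of the polytope P_{n,i} is vol(P_{n,i}) = (2^n/n!) · Σ_{k=0}^{i} (−1)^k · C(n,k) · (i−k)^n, where C(n,k) denotes the binomial coefficient. -/
open MeasureTheory Pointwise

/-!
Write `Q n t = {x ∈ [-1,1]ⁿ | ∑ |xⱼ| ≤ t}`, so that `P_{n,i} = Q n i`. Slicing along the first
coordinate gives `vol (Q (n+1) t) = ∫_{-1}^{1} vol (Q n (t - |a|)) da`. The function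
`2ⁿ Hₙ(t)`, with `Hₙ(t) = (1/n!) ∑ₖ (-1)ᵏ C(n,k) (t-k)₊ⁿ` the Irwin–Hall distribution function,
obeys the same recursion, since `∫₀¹ Hₘ(t-a) da = Hₘ₊₁(t)` follows from Pascal's rule, and it
agrees with the volume for `n = 1`. At `t = i`, the terms with `k > i` vanish.
-/

open Finset
open scoped Nat

theorem alternating_sum_choose_succ_mul {R : Type*} [CommRing R] (f : ℕ → R) (m : ℕ) :
    ∑ k ∈ range (m + 2), (-1) ^ k * ((m + 1).choose k : R) * f k =
      ∑ k ∈ range (m + 1), (-1) ^ k * (m.choose k : R) * (f k - f (k + 1)) := by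
  have pascal : ∀ k ∈ range (m + 1),
      (-1) ^ (k + 1) * ((m + 1).choose (k + 1) : R) * f (k + 1) =
        (-1) ^ (k + 1) * (m.choose (k + 1) : R) * f (k + 1)
          - (-1) ^ k * (m.choose k : R) * f (k + 1) := by
    intro k _
    rw [Nat.choose_succ_succ', Nat.cast_add]
    ring
  have shifted : ∑ k ∈ range (m + 1), (-1) ^ (k + 1) * (m.choose (k + 1) : R) * f (k + 1) + f 0 =
      ∑ k ∈ range (m + 1), (-1) ^ k * (m.choose k : R) * f k := by
    rw [sum_range_succ, Nat.choose_succ_self, sum_range_succ' _ m]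
    simp
  rw [sum_range_succ', pow_zero, Nat.choose_zero_right, Nat.cast_one, one_mul, one_mul,
    sum_congr rfl pascal, sum_sub_distrib, sub_add_eq_add_sub, shifted,
    ← sum_sub_distrib]
  exact sum_congr rfl fun k _ => by ring

theorem integral_zero_posPart_pow {m : ℕ} (hm : m ≠ 0) (c : ℝ) :
    ∫ u in (0 : ℝ)..c, u⁺ ^ m = c⁺ ^ (m + 1) / (m + 1) := by
  rcases le_total 0 c with hc | hc
  · calc ∫ u in (0 : ℝ)..c, u⁺ ^ m = ∫ u in (0 : ℝ)..c, u ^ m :=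
          intervalIntegral.integral_congr fun u hu => by
            rw [Set.uIcc_of_le hc] at hu
            simp only [posPart_eq_self.2 hu.1]
      _ = c⁺ ^ (m + 1) / (m + 1) := by simp [integral_pow, posPart_eq_self.2 hc]
  · rw [posPart_eq_zero.2 hc, zero_pow (Nat.succ_ne_zero m), zero_div]
    refine (intervalIntegral.integral_congr fun u hu => ?_).trans intervalIntegral.integral_zero
    rw [Set.uIcc_of_ge hc] at hu
    simp only [posPart_eq_zero.2 hu.2, zero_pow hm]

theorem integral_posPart_sub_pow {m : ℕ} (hm : m ≠ 0) (s : ℝ) :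
    ∫ a in (0 : ℝ)..1, (s - a)⁺ ^ m = (s⁺ ^ (m + 1) - (s - 1)⁺ ^ (m + 1)) / (m + 1) := by
  have hint : ∀ c, IntervalIntegrable (fun u : ℝ => u⁺ ^ m) volume 0 c := fun c =>
    (by fun_prop : Continuous fun u : ℝ => u⁺ ^ m).intervalIntegrable 0 c
  rw [intervalIntegral.integral_comp_sub_left (fun u => u⁺ ^ m), sub_zero,
    ← intervalIntegral.integral_interval_sub_left (hint s) (hint (s - 1)),
    integral_zero_posPart_pow hm, integral_zero_posPart_pow hm, sub_div]

theorem intervalIntegral.integral_comp_abs {f : ℝ → ℝ} (hf : Continuous f) {c : ℝ}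
    (hc : 0 ≤ c) :
    ∫ a in -c..c, f |a| = 2 * ∫ a in (0 : ℝ)..c, f a := by
  have hint : ∀ a b, IntervalIntegrable (fun x => f |x|) volume a b := fun a b =>
    (hf.comp continuous_abs).intervalIntegrable a b
  have hpos : ∫ a in (0 : ℝ)..c, f |a| = ∫ a in (0 : ℝ)..c, f a := by
    refine intervalIntegral.integral_congr fun u hu => ?_
    rw [Set.uIcc_of_le hc] at hu
    simp only [abs_of_nonneg hu.1]
  have hneg : ∫ a in -c..0, f |a| = ∫ a in (0 : ℝ)..c, f |a| := by
    simpa using intervalIntegral.integral_comp_neg (a := -c) (b := 0) fun a => f |a|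
  rw [← intervalIntegral.integral_add_adjacent_intervals (hint (-c) 0) (hint 0 c), hneg, hpos,
    two_mul]

/-- `0 ^ 0 = 1` makes `irwinHallCDF 0` the constant `1` rather than a distribution function. -/
noncomputable def irwinHallCDF (n : ℕ) (t : ℝ) : ℝ :=
  (n ! : ℝ)⁻¹ * ∑ k ∈ range (n + 1), (-1) ^ k * (n.choose k : ℝ) * (t - k)⁺ ^ n

@[fun_prop]
theorem continuous_irwinHallCDF (n : ℕ) : Continuous (irwinHallCDF n) := by
  unfold irwinHallCDF
  fun_prop

theorem integral_irwinHallCDF_sub {m : ℕ} (hm : m ≠ 0) (t : ℝ) :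
    ∫ a in (0 : ℝ)..1, irwinHallCDF m (t - a) = irwinHallCDF (m + 1) t := by
  have hterm : ∀ k : ℕ, ∫ a in (0 : ℝ)..1, (t - a - k)⁺ ^ m =
      ((t - k)⁺ ^ (m + 1) - (t - ↑(k + 1))⁺ ^ (m + 1)) / (m + 1) := by
    intro k
    simp_rw [sub_right_comm t _ (k : ℝ)]
    rw [integral_posPart_sub_pow hm, Nat.cast_succ, sub_add_eq_sub_sub]
  simp only [irwinHallCDF, intervalIntegral.integral_const_mul]
  rw [intervalIntegral.integral_finsetSum fun k _ =>
    Continuous.intervalIntegrable (by fun_prop) _ _]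
  simp only [intervalIntegral.integral_const_mul, hterm]
  rw [alternating_sum_choose_succ_mul (fun k => (t - k)⁺ ^ (m + 1)), Nat.factorial_succ,
    Nat.cast_mul, mul_sum, mul_sum]
  refine sum_congr rfl fun k _ => ?_
  push_cast
  field_simp

theorem irwinHallCDF_one (t : ℝ) : irwinHallCDF 1 t = t⁺ - (t - 1)⁺ := by
  simp [irwinHallCDF, sum_range_succ, sub_eq_add_neg]

theorem irwinHallCDF_nonneg {n : ℕ} (hn : n ≠ 0) (t : ℝ) : 0 ≤ irwinHallCDF n t := by
  induction n, Nat.one_le_iff_ne_zero.2 hn using Nat.le_induction generalizing t with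
  | base => simpa [irwinHallCDF_one] using posPart_mono (by linarith : t - 1 ≤ t)
  | succ m hm ih =>
    rw [← integral_irwinHallCDF_sub (by omega)]
    exact intervalIntegral.integral_nonneg zero_le_one fun a _ => ih (by omega) _

def cubeInterL1Ball (n : ℕ) (t : ℝ) : Set (Fin n → ℝ) :=
  {x | (∀ j, |x j| ≤ 1) ∧ ∑ j, |x j| ≤ t}

theorem measurableSet_cubeInterL1Ball (n : ℕ) (t : ℝ) :
    MeasurableSet (cubeInterL1Ball n t) := by
  unfold cubeInterL1Ball
  measurability

theorem cons_mem_cubeInterL1Ball {n : ℕ} {t a : ℝ} {y : Fin n → ℝ} :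
    Fin.cons a y ∈ cubeInterL1Ball (n + 1) t ↔ |a| ≤ 1 ∧ y ∈ cubeInterL1Ball n (t - |a|) := by
  simp only [cubeInterL1Ball, Set.mem_ofPred_eq, Fin.forall_fin_succ, Fin.sum_univ_succ,
    Fin.cons_zero, Fin.cons_succ, le_sub_iff_add_le']
  tauto

theorem volume_cubeInterL1Ball_succ (n : ℕ) (t : ℝ) :
    volume (cubeInterL1Ball (n + 1) t) =
      ∫⁻ a in Set.Icc (-1 : ℝ) 1, volume (cubeInterL1Ball n (t - |a|)) := by
  let e := (MeasurableEquiv.piFinSuccAbove (fun _ : Fin (n + 1) => ℝ) 0).symm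
  have he : MeasurePreserving e := (volume_preserving_piFinSuccAbove _ 0).symm
  have hmeas := measurableSet_cubeInterL1Ball (n + 1) t
  have hslice : ∀ a, Prod.mk a ⁻¹' (e ⁻¹' cubeInterL1Ball (n + 1) t) =
      {y | |a| ≤ 1 ∧ y ∈ cubeInterL1Ball n (t - |a|)} :=
    fun a => Set.ext fun y => by
      simp only [e, Set.mem_preimage, MeasurableEquiv.piFinSuccAbove_symm_apply,
        Fin.insertNthEquiv_zero]
      exact cons_mem_cubeInterL1Ball
  rw [← he.measure_preimage hmeas.nullMeasurableSet, Measure.volume_eq_prod,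
    Measure.prod_apply (hmeas.preimage e.measurable), ← lintegral_indicator measurableSet_Icc]
  refine lintegral_congr fun a => ?_
  by_cases ha : |a| ≤ 1
  · simp [Set.indicator_of_mem (s := Set.Icc (-1) 1) (abs_le.1 ha), hslice, ha]
  · simp [Set.indicator_of_notMem (s := Set.Icc (-1) 1) (mt abs_le.2 ha), hslice, ha]

theorem volume_cubeInterL1Ball_one (t : ℝ) :
    volume (cubeInterL1Ball 1 t) = ENNReal.ofReal (2 * irwinHallCDF 1 t) := by
  have he : MeasurePreserving (MeasurableEquiv.funUnique (Fin 1) ℝ).symm volume volume :=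
    (volume_preserving_funUnique (Fin 1) ℝ).symm
  have hset : (MeasurableEquiv.funUnique (Fin 1) ℝ).symm ⁻¹' cubeInterL1Ball 1 t =
      Set.Icc (-min 1 t) (min 1 t) := by
    ext a
    rw [Set.mem_Icc, ← abs_le, le_min_iff]
    simp [cubeInterL1Ball]
  rw [← he.measure_preimage (measurableSet_cubeInterL1Ball 1 t).nullMeasurableSet, hset,
    Real.volume_Icc, irwinHallCDF_one]
  rcases le_total t 0 with ht | ht
  · rw [posPart_eq_zero.2 ht, posPart_eq_zero.2 (by linarith), min_eq_right (by linarith),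
      ENNReal.ofReal_of_nonpos (by linarith)]
    simp
  rcases le_total t 1 with ht1 | ht1
  · rw [posPart_eq_self.2 ht, posPart_eq_zero.2 (by linarith), min_eq_right ht1]
    ring_nf
  · rw [posPart_eq_self.2 ht, posPart_eq_self.2 (by linarith), min_eq_left ht1]
    ring_nf

theorem volume_cubeInterL1Ball {n : ℕ} (hn : n ≠ 0) (t : ℝ) :
    volume (cubeInterL1Ball n t) = ENNReal.ofReal (2 ^ n * irwinHallCDF n t) := by
  induction n, Nat.one_le_iff_ne_zero.2 hn using Nat.le_induction generalizing t with
  | base => simpa using volume_cubeInterL1Ball_one t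
  | succ m hm ih =>
    have hcont : Continuous fun a => 2 ^ m * irwinHallCDF m (t - |a|) := by fun_prop
    have hnonneg : ∀ a, 0 ≤ 2 ^ m * irwinHallCDF m (t - |a|) := fun a =>
      mul_nonneg (by positivity) (irwinHallCDF_nonneg (by omega) _)
    calc volume (cubeInterL1Ball (m + 1) t)
        = ∫⁻ a in Set.Icc (-1 : ℝ) 1, ENNReal.ofReal (2 ^ m * irwinHallCDF m (t - |a|)) := by
          simp only [volume_cubeInterL1Ball_succ, ih (by omega)]
      _ = ENNReal.ofReal (∫ a in (-1 : ℝ)..1, 2 ^ m * irwinHallCDF m (t - |a|)) := by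
          rw [intervalIntegral.integral_of_le (by norm_num), ← integral_Icc_eq_integral_Ioc,
            ofReal_integral_eq_lintegral_ofReal hcont.integrableOn_Icc
              (Filter.Eventually.of_forall hnonneg)]
      _ = ENNReal.ofReal (2 ^ (m + 1) * irwinHallCDF (m + 1) t) := by
          rw [intervalIntegral.integral_comp_abs (f := fun a => 2 ^ m * irwinHallCDF m (t - a))
            (by fun_prop) zero_le_one,
            intervalIntegral.integral_const_mul, integral_irwinHallCDF_sub (by omega)]
          congr 1
          ring

theorem cube_inter_smul_crosspolytope {n : ℕ} {t : ℝ} (ht : 0 < t) :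
    cube n ∩ t • crosspolytope n = WithLp.ofLp ⁻¹' cubeInterL1Ball n t := by
  ext x
  rw [Set.mem_inter_iff, Set.mem_smul_set_iff_inv_smul_mem₀ ht.ne']
  simp only [cube, crosspolytope, cubeInterL1Ball, Set.mem_preimage, Set.mem_ofPred_eq,
    PiLp.smul_apply, smul_eq_mul, abs_mul, abs_inv, abs_of_pos ht, ← mul_sum,
    inv_mul_le_iff₀ ht, mul_one]

theorem irwinHallCDF_natCast {n i : ℕ} (hn : n ≠ 0) (hi : i ≤ n) :
    irwinHallCDF n i =
      (n ! : ℝ)⁻¹ * ∑ k ∈ range (i + 1), (-1) ^ k * (n.choose k : ℝ) * ((i : ℝ) - k) ^ n := by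
  rw [irwinHallCDF, ← sum_subset (range_subset_range.2 (by omega : i + 1 ≤ n + 1))]
  · refine congrArg _ (sum_congr rfl fun k hk => ?_)
    have hki : (k : ℝ) ≤ i := by exact_mod_cast Nat.lt_succ_iff.1 (mem_range.1 hk)
    rw [posPart_eq_self.2 (sub_nonneg.2 hki)]
  · intro k _ hk
    have hik : (i : ℝ) ≤ k := by
      exact_mod_cast (Nat.succ_le_iff.1 (not_lt.1 (mt mem_range.2 hk))).le
    rw [posPart_eq_zero.2 (sub_nonpos.2 hik), zero_pow hn, mul_zero]

/-- For `1 ≤ i ≤ n`, the volume of `P_{n,i}` equals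
`(2ⁿ/n!) · ∑_{k=0}^{i} (-1)^k · C(n,k) · (i-k)ⁿ`. -/
theorem volume_Pcc (n i : ℕ) (hi1 : 1 ≤ i) (hi2 : i ≤ n) :
    (volume (Pcc n i)).toReal =
      (2 : ℝ) ^ n / (Nat.factorial n : ℝ) *
        ∑ k ∈ Finset.range (i + 1), (-1 : ℝ) ^ k * (n.choose k : ℝ) * ((i : ℝ) - k) ^ n := by
  have hn : n ≠ 0 := by omega
  rw [Pcc, cube_inter_smul_crosspolytope (by exact_mod_cast hi1),
    (PiLp.volume_preserving_ofLp _).measure_preimage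
      (measurableSet_cubeInterL1Ball n i).nullMeasurableSet,
    volume_cubeInterL1Ball hn, ENNReal.toReal_ofReal
      (mul_nonneg (by positivity) (irwinHallCDF_nonneg hn _)), irwinHallCDF_natCast hn hi2,
    div_eq_mul_inv, mul_assoc]
end

section
/- Let K be a convex body in ℝ^n, let j ∈ {1, …, n}, and let L be an i-dimensional lattice plane of ℤ^n with i ≥ j (i.e. an i-dimensional linear subspace of ℝ^n spanned by vectors of ℤ^n). Then μ_j(K) ≥ μ_j(K|L, ℤ^n|L), where K|L and ℤ^n|L denote the orthogonal projections of K and ℤ^n onto L, and μ_j(K|L, ℤ^n|L) is the j-th covering minimum computed inside the i-dimensional space L, namely min{μ > 0 : (μ(K|L) + ℤ^n|L) ∩ M ≠ ∅ for every (i−j)-dimensional affine subspace M of L}. -/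
open MeasureTheory Pointwise

/-- The `j`-th covering minimum of a set `K` with respect to a lattice `Λ` inside an ambient
finite-dimensional real inner product space `V`: the least `μ > 0` such that `μK + Λ` meets
every affine subspace of `V` of dimension `dim V - j`. -/
noncomputable def covMinGen {V : Type*} [NormedAddCommGroup V] [InnerProductSpace ℝ V]
    (j : ℕ) (K Λ : Set V) : ℝ :=
  sInf {μ : ℝ | 0 < μ ∧ ∀ L : AffineSubspace ℝ V,
    (L : Set V).Nonempty →
    Module.finrank ℝ L.direction = Module.finrank ℝ V - j →
    ((μ • K + Λ) ∩ (L : Set V)).Nonempty}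

/-!
A set `μK + ℤⁿ` meeting every affine subspace of dimension `n - j` is pushed forward by the
orthogonal projection onto `L` to a set `μ(K|L) + ℤⁿ|L` meeting every affine subspace of `L` of
dimension `i - j`: the preimage of such a subspace is an affine subspace of `ℝⁿ` of the same
codimension `j`. Hence every admissible `μ` for `K` is admissible for `K|L`, and comparing the
infima needs only that some `μ` is admissible for `K`, which holds because `K` contains a ball
and `ℤⁿ` is `√n/2`-dense.
-/

open Module Function

theorem Submodule.finrank_comap_add_finrank_of_surjective {k V W : Type*} [DivisionRing k]
    [AddCommGroup V] [Module k V] [AddCommGroup W] [Module k W]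
    [FiniteDimensional k V] [FiniteDimensional k W]
    {f : V →ₗ[k] W} (hf : Surjective f) (p : Submodule k W) :
    finrank k (p.comap f) + finrank k W = finrank k V + finrank k p := by
  have hker : LinearMap.ker (p.mkQ ∘ₗ f) = p.comap f := by
    rw [LinearMap.ker_comp, Submodule.ker_mkQ]
  have hrange : LinearMap.range (p.mkQ ∘ₗ f) = ⊤ :=
    LinearMap.range_eq_top.mpr ((Submodule.mkQ_surjective p).comp hf)
  have hV := LinearMap.finrank_range_add_finrank_ker (p.mkQ ∘ₗ f)
  have hW := Submodule.finrank_quotient_add_finrank p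
  rw [hker, hrange, finrank_top] at hV
  omega

/-- `covMinGen j K Λ` is the infimum of the `μ > 0` with
`MeetsAffineSubspacesOfCodim j (μ • K + Λ)`. -/
def MeetsAffineSubspacesOfCodim {V : Type*} [AddCommGroup V] [Module ℝ V]
    (j : ℕ) (S : Set V) : Prop :=
  ∀ M : AffineSubspace ℝ V, (M : Set V).Nonempty →
    finrank ℝ M.direction = finrank ℝ V - j → (S ∩ M).Nonempty

theorem MeetsAffineSubspacesOfCodim.image {V W : Type*} [AddCommGroup V] [Module ℝ V]
    [AddCommGroup W] [Module ℝ W] [FiniteDimensional ℝ V] [FiniteDimensional ℝ W]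
    {j : ℕ} {S : Set V} (hS : MeetsAffineSubspacesOfCodim j S)
    {f : V →ₗ[ℝ] W} (hf : Surjective f) (hj : j ≤ finrank ℝ W) :
    MeetsAffineSubspacesOfCodim j (f '' S) := by
  rintro M ⟨p, hp⟩ hM
  obtain ⟨x₀, rfl⟩ := hf p
  let M' := AffineSubspace.mk' x₀ (M.direction.comap f)
  have hM' : finrank ℝ M'.direction = finrank ℝ V - j := by
    have := Submodule.finrank_comap_add_finrank_of_surjective hf M.direction
    rw [AffineSubspace.direction_mk']
    omega
  obtain ⟨x, hxS, hxM'⟩ := hS M' ⟨x₀, AffineSubspace.self_mem_mk' _ _⟩ hM'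
  have hdir : f x - f x₀ ∈ M.direction := by
    simpa using AffineSubspace.mem_mk'.mp hxM'
  refine ⟨f x, Set.mem_image_of_mem f hxS, ?_⟩
  simpa using AffineSubspace.vadd_mem_of_mem_direction hdir hp

theorem covMinGen_le_covMinGen {V W : Type*} [NormedAddCommGroup V] [InnerProductSpace ℝ V]
    [NormedAddCommGroup W] [InnerProductSpace ℝ W]
    {j : ℕ} {K Λ : Set V} {K' Λ' : Set W}
    (hne : ∃ μ : ℝ, 0 < μ ∧ MeetsAffineSubspacesOfCodim j (μ • K + Λ))
    (h : ∀ μ : ℝ, 0 < μ → MeetsAffineSubspacesOfCodim j (μ • K + Λ) →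
      MeetsAffineSubspacesOfCodim j (μ • K' + Λ')) :
    covMinGen j K' Λ' ≤ covMinGen j K Λ :=
  csInf_le_csInf ⟨0, fun _ hμ => hμ.1.le⟩ hne fun μ ⟨hμ, hS⟩ => ⟨hμ, h μ hμ hS⟩

section NormedSpace

variable {V : Type*} [NormedAddCommGroup V] [NormedSpace ℝ V]

theorem smul_add_eq_univ_of_ball_subset {K Λ : Set V} {c : V} {r R μ : ℝ}
    (hball : Metric.ball c r ⊆ K) (hΛ : ∀ y, ∃ l ∈ Λ, ‖y - l‖ ≤ R)
    (hμ : 0 < μ) (hR : R < μ * r) :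
    μ • K + Λ = Set.univ := by
  refine Set.eq_univ_of_forall fun y => ?_
  obtain ⟨l, hl, hyl⟩ := hΛ (y - μ • c)
  have hmem : μ⁻¹ • (y - l) ∈ K := by
    apply hball
    have hdist : μ⁻¹ • (y - l) - c = μ⁻¹ • (y - μ • c - l) := by
      rw [smul_sub, smul_sub, smul_sub, inv_smul_smul₀ hμ.ne']
      abel
    rw [Metric.mem_ball, dist_eq_norm, hdist, norm_smul, Real.norm_of_nonneg (inv_nonneg.mpr hμ.le),
      inv_mul_lt_iff₀ hμ]
    linarith
  refine ⟨μ • μ⁻¹ • (y - l), Set.smul_mem_smul_set hmem, l, hl, ?_⟩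
  simp [smul_inv_smul₀ hμ.ne']

theorem exists_pos_meetsAffineSubspacesOfCodim {K Λ : Set V} (hK : (interior K).Nonempty)
    {R : ℝ} (hΛ : ∀ y, ∃ l ∈ Λ, ‖y - l‖ ≤ R) (j : ℕ) :
    ∃ μ : ℝ, 0 < μ ∧ MeetsAffineSubspacesOfCodim j (μ • K + Λ) := by
  obtain ⟨c, hc⟩ := hK
  obtain ⟨r, hr, hball⟩ := Metric.isOpen_iff.mp isOpen_interior c hc
  have hR : R < (|R| + 1) / r * r := by
    rw [div_mul_cancel₀ _ hr.ne']
    linarith [le_abs_self R]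
  have hcover := smul_add_eq_univ_of_ball_subset (hball.trans interior_subset) hΛ
    (by positivity) hR
  refine ⟨(|R| + 1) / r, by positivity, ?_⟩
  rintro M ⟨p, hp⟩ -
  exact ⟨p, by rw [hcover]; trivial, hp⟩

end NormedSpace

theorem exists_mem_intLattice_norm_sub_le {n : ℕ} (y : EuclideanSpace ℝ (Fin n)) :
    ∃ l ∈ intLattice n, ‖y - l‖ ≤ √n / 2 := by
  refine ⟨WithLp.toLp 2 fun k => (round (y k) : ℝ), fun k => ⟨round (y k), rfl⟩, ?_⟩
  rw [← sq_le_sq₀ (norm_nonneg _) (by positivity), EuclideanSpace.norm_sq_eq, div_pow,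
    Real.sq_sqrt n.cast_nonneg]
  calc ∑ k, ‖(y - WithLp.toLp 2 fun k => (round (y k) : ℝ)) k‖ ^ 2
      ≤ ∑ _k : Fin n, (1 / 2 : ℝ) ^ 2 := by
        gcongr with k
        exact abs_sub_round (y k)
    _ = n / 2 ^ 2 := by simp [div_eq_mul_inv]

theorem covMin_ge_covMin_proj_general (n : ℕ) (K : Set (EuclideanSpace ℝ (Fin n)))
    (hKint : (interior K).Nonempty)
    (j i : ℕ) (hji : j ≤ i)
    (L : Submodule ℝ (EuclideanSpace ℝ (Fin n)))
    (hLdim : Module.finrank ℝ L = i) :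
    covMinGen j K (intLattice n) ≥
      covMinGen j ((L.orthogonalProjectionOnto) '' K) ((L.orthogonalProjectionOnto) '' intLattice n) := by
  have hπ : Surjective L.orthogonalProjectionOnto := fun y =>
    ⟨y, Submodule.orthogonalProjectionOnto_mem_subspace_eq_self y⟩
  refine covMinGen_le_covMinGen
    (exists_pos_meetsAffineSubspacesOfCodim hKint exists_mem_intLattice_norm_sub_le j)
    fun μ _ hμ => ?_
  rw [← image_smul_set, ← Set.image_add]
  exact hμ.image (f := L.orthogonalProjectionOnto.toLinearMap) hπ (hLdim ▸ hji)

/-- Let `K` be a convex body in `ℝⁿ`, `1 ≤ j ≤ i ≤ n`, and let `L` be an `i`-dimensional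
lattice plane of `ℤⁿ` (an `i`-dimensional linear subspace spanned by integer vectors).
Then `μ_j(K) ≥ μ_j(K|L, ℤⁿ|L)`, where `K|L` and `ℤⁿ|L` are the orthogonal projections
onto `L` and the covering minimum on the right is computed inside `L`. -/
theorem covMin_ge_covMin_proj (n : ℕ) (hn : 1 ≤ n) (K : Set (EuclideanSpace ℝ (Fin n)))
    (hKcpt : IsCompact K) (hKconv : Convex ℝ K) (hKint : (interior K).Nonempty)
    (j i : ℕ) (hj1 : 1 ≤ j) (hji : j ≤ i) (hin : i ≤ n)
    (L : Submodule ℝ (EuclideanSpace ℝ (Fin n)))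
    (hLdim : Module.finrank ℝ L = i)
    (hLlat : ∃ s ⊆ intLattice n, L = Submodule.span ℝ s) :
    covMinGen j K (intLattice n) ≥
      covMinGen j ((L.orthogonalProjectionOnto) '' K) ((L.orthogonalProjectionOnto) '' intLattice n) :=
  covMin_ge_covMin_proj_general n K hKint j i hji L hLdim
end

section
/- Let K be a standard unconditional convex body in ℝ^n and let S = K ∩ ℝ^n_{≥0}, where ℝ^n_{≥0} is the nonnegative orthant. Then for every i ∈ {1, …, n}, μ_i(S) = 2·μ_i(K). -/
open MeasureTheory Pointwise

/-- A set `K ⊆ ℝⁿ` is standard unconditional if it is symmetric with respect to every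
coordinate hyperplane, i.e. stable under all sign changes of the coordinates. -/
def StdUnconditional (n : ℕ) (K : Set (EuclideanSpace ℝ (Fin n))) : Prop :=
  ∀ x ∈ K, ∀ ε : Fin n → ℝ, (∀ j, ε j = 1 ∨ ε j = -1) →
    (WithLp.toLp 2 (fun j => ε j * x j) : EuclideanSpace ℝ (Fin n)) ∈ K

/-- The nonnegative orthant `ℝⁿ_{≥0}`. -/
def orthant (n : ℕ) : Set (EuclideanSpace ℝ (Fin n)) := {x | ∀ j, 0 ≤ x j}

/-! An unconditional convex set `T` is solid: it contains every point whose coordinates are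
dominated in modulus by those of a point of `T`. Hence `T + ℤⁿ` meets every `(n - i)`-flat
iff `T` contains the half corners `½·1_I` for all `|I| = i`, while `(T ∩ ℝⁿ_{≥0}) + ℤⁿ`
does so iff `T` contains the corners `1_I`. Necessity: the flat
`{x_I = c}` yields a point of `T` whose `I`-coordinates are `≡ c mod 1`, so of modulus `≥ ½`
for `c = ½`, and `≥ c` for `c < 1` in the orthant (then let `c → 1`). Sufficiency: every
`(n - i)`-flat contains a point supported on `i` coordinates, and rounding it (resp. taking
fractional parts) moves it by a lattice vector into the box spanned by the corner. Comparing the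
two criteria at scales `μ` and `μ / 2` gives `μ_i(S) = 2 μ_i(K)`. -/

open Module Submodule in
theorem Module.Basis.exists_finset_card_add_finrank_le_sup_span_eq_top
    {ι K M : Type*} [Field K] [AddCommGroup M] [Module K M] [FiniteDimensional K M]
    (b : Basis ι K M) (V : Submodule K M) :
    ∃ I : Finset ι, I.card + finrank K V ≤ finrank K M ∧ V ⊔ span K (b '' I) = ⊤ := by
  classical
  have hs : span K (Set.range (V.mkQ ∘ b)) = ⊤ := by
    rw [Set.range_comp, ← map_span, b.span_eq, Submodule.map_top, range_mkQ]
  obtain ⟨g, hgs, hg, -⟩ := exists_fun_fin_finrank_span_eq K (Set.range (V.mkQ ∘ b))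
  choose φ hφ using hgs
  refine ⟨Finset.univ.image φ, ?_, ?_⟩
  · have hrank : finrank K (span K (Set.range (V.mkQ ∘ b))) = finrank K (M ⧸ V) := by
      rw [hs, finrank_top]
    have := (Finset.card_image_le (s := Finset.univ) (f := φ)).trans_eq (Finset.card_fin _)
    have := V.finrank_quotient_add_finrank
    omega
  · rw [← map_mkQ_eq_top, map_span, ← top_le_iff, ← hg.trans hs]
    refine span_mono ?_
    rintro _ ⟨k, rfl⟩
    exact ⟨b (φ k), ⟨φ k, by simp, rfl⟩, hφ k⟩

open Module in
theorem AffineSubspace.exists_mem_support_repr_subset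
    {ι K M : Type*} [Field K] [AddCommGroup M] [Module K M] [FiniteDimensional K M]
    (b : Basis ι K M) (L : AffineSubspace K M) (hL : (L : Set M).Nonempty) :
    ∃ I : Finset ι, I.card + finrank K L.direction ≤ finrank K M ∧
      ∃ w ∈ L, ↑(b.repr w).support ⊆ (I : Set ι) := by
  obtain ⟨I, hcard, htop⟩ := b.exists_finset_card_add_finrank_le_sup_span_eq_top L.direction
  obtain ⟨p, hp⟩ := hL
  obtain ⟨v, hv, w, hw, rfl⟩ := Submodule.mem_sup.mp (htop ▸ Submodule.mem_top : p ∈ _)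
  refine ⟨I, hcard, w, ?_, b.mem_span_image.mp hw⟩
  simpa using L.vadd_mem_of_mem_direction (neg_mem hv) hp

namespace StdUnconditional

variable {n : ℕ} {K : Set (EuclideanSpace ℝ (Fin n))}

theorem smul (hK : StdUnconditional n K) (c : ℝ) : StdUnconditional n (c • K) := by
  rintro _ ⟨x, hx, rfl⟩ ε hε
  refine ⟨_, hK x hx ε hε, ?_⟩
  ext j
  simp only [PiLp.smul_apply, smul_eq_mul]
  ring

/-- `y` is a convex combination of `x` and its reflection in the `j`-th coordinate hyperplane. -/
theorem mem_of_abs_le_of_eq_of_ne (hK : StdUnconditional n K) (hconv : Convex ℝ K)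
    {x y : EuclideanSpace ℝ (Fin n)} (hx : x ∈ K) (j : Fin n) (hyj : |y j| ≤ |x j|)
    (hy : ∀ l ≠ j, y l = x l) : y ∈ K := by
  obtain ⟨s, t, hs, ht, hst, hsum⟩ : y j ∈ segment ℝ (x j) (-x j) := by
    rw [segment_eq_uIcc, Set.mem_uIcc]
    grind [abs_le, abs_cases]
  have hflip := hK x hx (fun l => if l = j then -1 else 1) (fun l => by split_ifs <;> simp)
  convert hconv hx hflip hs ht hst using 1
  ext l
  by_cases hl : l = j
  · subst hl; simp [← hsum]
  · simp [hl, hy l hl, ← add_mul, hst]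

theorem mem_of_abs_le (hK : StdUnconditional n K) (hconv : Convex ℝ K)
    {x y : EuclideanSpace ℝ (Fin n)} (hx : x ∈ K) (hxy : ∀ j, |y j| ≤ |x j|) : y ∈ K := by
  classical
  suffices ∀ F : Finset (Fin n),
      (WithLp.toLp 2 fun l => if l ∈ F then y l else x l : EuclideanSpace ℝ (Fin n)) ∈ K by
    simpa using this Finset.univ
  intro F
  induction F using Finset.induction_on with
  | empty => simpa using hx
  | insert a F ha ih =>
    refine hK.mem_of_abs_le_of_eq_of_ne hconv ih a (by simpa [ha] using hxy a) fun l hl => ?_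
    simp [hl]

end StdUnconditional

section Covering

variable {n i : ℕ} {T : Set (EuclideanSpace ℝ (Fin n))}

def corner (I : Finset (Fin n)) (c : ℝ) : EuclideanSpace ℝ (Fin n) :=
  WithLp.toLp 2 fun j => if j ∈ I then c else 0

@[simp]
theorem corner_apply (I : Finset (Fin n)) (c : ℝ) (j : Fin n) :
    corner I c j = if j ∈ I then c else 0 := rfl

theorem corner_eq_smul (I : Finset (Fin n)) (c : ℝ) : corner I c = c • corner I 1 := by
  ext j
  simp

def CoversFlats (n i : ℕ) (T : Set (EuclideanSpace ℝ (Fin n))) : Prop :=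
  ∀ L : AffineSubspace ℝ (EuclideanSpace ℝ (Fin n)),
    (L : Set (EuclideanSpace ℝ (Fin n))).Nonempty → Module.finrank ℝ L.direction = n - i →
    ((T + intLattice n) ∩ (L : Set (EuclideanSpace ℝ (Fin n)))).Nonempty

theorem covMin_eq_sInf_coversFlats (K : Set (EuclideanSpace ℝ (Fin n))) :
    covMin n i K = sInf {μ : ℝ | 0 < μ ∧ CoversFlats n i (μ • K)} := rfl

def coordProj (I : Finset (Fin n)) : EuclideanSpace ℝ (Fin n) →ₗ[ℝ] (I → ℝ) :=
  LinearMap.funLeft ℝ ℝ ((↑) : I → Fin n) ∘ₗ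
    (WithLp.linearEquiv 2 ℝ (Fin n → ℝ)).toLinearMap

theorem finrank_ker_coordProj (I : Finset (Fin n)) :
    Module.finrank ℝ (LinearMap.ker (coordProj I)) = n - I.card := by
  have hsurj : Function.Surjective (coordProj I) :=
    (LinearMap.funLeft_surjective_of_injective ℝ ℝ _ Subtype.val_injective).comp
      (WithLp.linearEquiv 2 ℝ (Fin n → ℝ)).surjective
  have := LinearMap.finrank_range_add_finrank_ker (coordProj I)
  rw [LinearMap.range_eq_top.mpr hsurj, finrank_top, Module.finrank_fintype_fun_eq_card,
    Fintype.card_coe, finrank_euclideanSpace_fin] at this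
  omega

theorem CoversFlats.exists_add_eq (hT : CoversFlats n i T) {I : Finset (Fin n)}
    (hI : I.card = i) (c : ℝ) : ∃ t ∈ T, ∀ j ∈ I, ∃ m : ℤ, t j + m = c := by
  obtain ⟨_, ⟨t, ht, z, hz, rfl⟩, hL⟩ :=
    hT (AffineSubspace.mk' (corner I c) (LinearMap.ker (coordProj I)))
      ⟨_, AffineSubspace.self_mem_mk' _ _⟩
      (by rw [AffineSubspace.direction_mk', finrank_ker_coordProj, hI])
  refine ⟨t, ht, fun j hj => ?_⟩
  obtain ⟨m, hm⟩ := hz j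
  refine ⟨m, ?_⟩
  have := congrFun (AffineSubspace.mem_mk'.mp hL) ⟨j, hj⟩
  simp [coordProj, hj, hm] at this
  linarith

theorem coversFlats_of_forall_support_subset
    (hi : i ≤ n) (h : ∀ I : Finset (Fin n), I.card = i →
      ∀ w : EuclideanSpace ℝ (Fin n), (∀ l ∉ I, w l = 0) → w ∈ T + intLattice n) :
    CoversFlats n i T := by
  intro L hL hdim
  obtain ⟨I, hcard, w, hwL, hw⟩ :=
    L.exists_mem_support_repr_subset (EuclideanSpace.basisFun (Fin n) ℝ).toBasis hL
  rw [hdim, finrank_euclideanSpace_fin] at hcard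
  obtain ⟨J, hIJ, hJ⟩ := Finset.exists_superset_card_eq (s := I) (n := i) (by omega) (by simpa)
  refine ⟨w, h J hJ w fun l hl => ?_, hwL⟩
  by_contra hne
  exact hl (hIJ (hw (by simpa using hne)))

theorem mem_add_intLattice_of_sub_mem (f : ℝ → ℤ)
    {w : EuclideanSpace ℝ (Fin n)} (h : WithLp.toLp 2 (fun l => w l - f (w l)) ∈ T) :
    w ∈ T + intLattice n :=
  ⟨_, h, WithLp.toLp 2 (fun l => (f (w l) : ℝ)), fun l => ⟨f (w l), rfl⟩, by ext l; simp⟩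

theorem coversFlats_iff_corner_half_mem
    (hT : StdUnconditional n T) (hconv : Convex ℝ T) (hi : i ≤ n) :
    CoversFlats n i T ↔ ∀ I : Finset (Fin n), I.card = i → corner I (1 / 2) ∈ T := by
  constructor
  · intro hcov I hI
    obtain ⟨t, ht, htI⟩ := hcov.exists_add_eq hI (1 / 2)
    refine hT.mem_of_abs_le hconv ht fun j => ?_
    by_cases hj : j ∈ I
    · obtain ⟨m, hm⟩ := htI j hj
      rw [corner_apply, if_pos hj, abs_of_pos one_half_pos, le_abs]
      rcases le_or_gt m 0 with h | h
      · have : (m : ℝ) ≤ 0 := mod_cast h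
        left; linarith
      · have : (1 : ℝ) ≤ m := mod_cast h
        right; linarith
    · simp [hj]
  · refine fun h => coversFlats_of_forall_support_subset hi fun I hI w hw => ?_
    refine mem_add_intLattice_of_sub_mem round (hT.mem_of_abs_le hconv (h I hI) fun j => ?_)
    by_cases hj : j ∈ I
    · simpa [hj] using abs_sub_round (w j)
    · simp [hj, hw j hj]

theorem coversFlats_inter_orthant_iff_corner_one_mem
    (hT : StdUnconditional n T) (hconv : Convex ℝ T) (hclosed : IsClosed T) (hi : i ≤ n) :
    CoversFlats n i (T ∩ orthant n) ↔
      ∀ I : Finset (Fin n), I.card = i → corner I 1 ∈ T := by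
  constructor
  · intro hcov I hI
    -- the flat `{x_I = 1}` alone only yields `t_I ≥ 0`, hence the limit `c → 1`
    have hIco : Set.Ico (0 : ℝ) 1 ⊆ (fun c : ℝ => c • corner I 1) ⁻¹' T := by
      rintro c ⟨hc0, hc1⟩
      obtain ⟨t, ⟨ht, ht0⟩, htI⟩ := hcov.exists_add_eq hI c
      rw [Set.mem_preimage, ← corner_eq_smul]
      refine hT.mem_of_abs_le hconv ht fun j => ?_
      by_cases hj : j ∈ I
      · obtain ⟨m, hm⟩ := htI j hj
        have hm1 : (m : ℝ) < 1 := by linarith [ht0 j]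
        have hm0 : (m : ℝ) ≤ 0 := Int.cast_nonpos.mpr (Int.lt_add_one_iff.mp (mod_cast hm1))
        rw [corner_apply, if_pos hj, abs_of_nonneg hc0, abs_of_nonneg (ht0 j)]
        linarith
      · simp [hj]
    have hIcc := (hclosed.preimage (continuous_id.smul continuous_const)).closure_subset_iff.mpr
      hIco
    rw [closure_Ico zero_ne_one] at hIcc
    simpa using hIcc ⟨zero_le_one, le_rfl⟩
  · refine fun h => coversFlats_of_forall_support_subset hi fun I hI w hw => ?_
    refine mem_add_intLattice_of_sub_mem Int.floor ⟨hT.mem_of_abs_le hconv (h I hI) fun j => ?_,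
      fun j => by simp⟩
    by_cases hj : j ∈ I
    · simpa [hj, abs_of_nonneg (Int.fract_nonneg (w j))] using (Int.fract_lt_one (w j)).le
    · simp [hj, hw j hj]

theorem smul_orthant {c : ℝ} (hc : 0 < c) : c • orthant n = orthant n := by
  ext x
  simp only [Set.mem_smul_set_iff_inv_smul_mem₀ hc.ne', orthant, Set.mem_ofPred,
    PiLp.smul_apply, smul_eq_mul]
  exact forall_congr' fun j => mul_nonneg_iff_of_pos_left (inv_pos.mpr hc)

theorem coversFlats_smul_inter_orthant_iff {K : Set (EuclideanSpace ℝ (Fin n))}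
    (hK : StdUnconditional n K) (hconv : Convex ℝ K) (hclosed : IsClosed K) (hi : i ≤ n)
    {μ : ℝ} (hμ : 0 < μ) :
    CoversFlats n i (μ • (K ∩ orthant n)) ↔ CoversFlats n i ((μ / 2) • K) := by
  rw [Set.smul_set_inter₀ hμ.ne', smul_orthant hμ,
    coversFlats_inter_orthant_iff_corner_one_mem (hK.smul μ) (hconv.smul μ)
      (hclosed.smul_of_ne_zero hμ.ne') hi,
    coversFlats_iff_corner_half_mem (hK.smul _) (hconv.smul _) hi]
  refine forall₂_congr fun I _ => ?_
  rw [corner_eq_smul I (1 / 2), div_eq_mul_one_div, mul_comm, mul_smul,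
    Set.smul_mem_smul_set_iff₀ (by norm_num)]

end Covering

theorem covMin_inter_orthant_general (n : ℕ) (K S : Set (EuclideanSpace ℝ (Fin n)))
    (hKcpt : IsCompact K) (hKconv : Convex ℝ K)
    (hKuncond : StdUnconditional n K) (hS : S = K ∩ orthant n)
    (i : ℕ) (hi2 : i ≤ n) :
    covMin n i S = 2 * covMin n i K := by
  have hsets : {μ : ℝ | 0 < μ ∧ CoversFlats n i (μ • S)}
      = (2 : ℝ) • {μ : ℝ | 0 < μ ∧ CoversFlats n i (μ • K)} := by
    ext μ
    rw [Set.mem_smul_set_iff_inv_smul_mem₀ two_ne_zero]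
    simp only [Set.mem_ofPred, smul_eq_mul, inv_mul_eq_div,
      div_pos_iff_of_pos_right (two_pos : (0 : ℝ) < 2)]
    rw [hS]
    exact and_congr_right
      (coversFlats_smul_inter_orthant_iff hKuncond hKconv hKcpt.isClosed hi2)
  rw [covMin_eq_sInf_coversFlats, covMin_eq_sInf_coversFlats, hsets,
    Real.sInf_smul_of_nonneg zero_le_two, smul_eq_mul]

/-- For a standard unconditional convex body `K` in `ℝⁿ` and `S = K ∩ ℝⁿ_{≥0}`, one has
`μ_i(S) = 2·μ_i(K)` for every `i ∈ {1, …, n}`. -/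
theorem covMin_inter_orthant (n : ℕ) (hn : 1 ≤ n) (K S : Set (EuclideanSpace ℝ (Fin n)))
    (hKcpt : IsCompact K) (hKconv : Convex ℝ K) (hKint : (interior K).Nonempty)
    (hKuncond : StdUnconditional n K) (hS : S = K ∩ orthant n)
    (i : ℕ) (hi1 : 1 ≤ i) (hi2 : i ≤ n) :
    covMin n i S = 2 * covMin n i K :=
  covMin_inter_orthant_general n K S hKcpt hKconv hKuncond hS i hi2
end

section
/- Let T = conv{v_0, v_1, …, v_n} be a full-dimensional simplex in ℝ^n with all vertices v_0, …, v_n ∈ ℤ^n. Then for every i ∈ {1, …, n}, μ_i(T) ≤ i. -/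
open MeasureTheory Pointwise

/-! Let `L` be an `(n - i)`-dimensional affine subspace through `x₀`, with direction `D`. The edge
vectors `v j - v 0` span `ℝⁿ`, so their images span the quotient `ℝⁿ ⧸ D`, of dimension at most
`i`, and at most `i` of them suffice to write `x₀ - i • v 0 ≡ ∑ c_j • (v j - v 0) (mod D)`.
Splitting every `c_j` into its fractional and integer part gives `x₀ ≡ q + z (mod D)`, where `z`
is an integral combination of the integral edge vectors and
`q = i • v 0 + ∑ fract c_j • (v j - v 0)` lies in `i • T` because at most `i` fractional parts,
each below `1`, add up to at most `i`. -/

theorem exists_finset_card_le_finrank_sum_smul_eq {K W ι : Type*} [Field K] [AddCommGroup W]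
    [Module K W] [FiniteDimensional K W] {w : ι → W} {y : W}
    (hy : y ∈ Submodule.span K (Set.range w)) :
    ∃ J : Finset ι, J.card ≤ Module.finrank K W ∧ ∃ c : ι → K, ∑ j ∈ J, c j • w j = y := by
  obtain ⟨b, -, -, hspan, hb⟩ :=
    exists_linearIndepOn_extension (linearIndepOn_empty K w) (Set.empty_subset Set.univ)
  rw [Set.image_univ, ← Submodule.span_le] at hspan
  obtain ⟨c, hc, rfl⟩ := (Finsupp.mem_span_image_iff_linearCombination K).1 (hspan hy)
  refine ⟨c.support, ?_, c, rfl⟩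
  simpa using (hb.mono hc).fintype_card_le_finrank

theorem Submodule.exists_finset_card_le_finrank_quotient_sub_sum_smul_mem {K V ι : Type*}
    [Field K] [AddCommGroup V] [Module K V] {u : ι → V}
    (hu : Submodule.span K (Set.range u) = ⊤) (D : Submodule K V) [FiniteDimensional K (V ⧸ D)]
    (x : V) :
    ∃ J : Finset ι, J.card ≤ Module.finrank K (V ⧸ D) ∧
      ∃ c : ι → K, x - ∑ j ∈ J, c j • u j ∈ D := by
  have hx : D.mkQ x ∈ Submodule.span K (Set.range (D.mkQ ∘ u)) := by
    rw [Set.range_comp, Submodule.span_image, hu, Submodule.map_top, Submodule.range_mkQ]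
    trivial
  obtain ⟨J, hJ, c, hc⟩ := exists_finset_card_le_finrank_sum_smul_eq hx
  refine ⟨J, hJ, c, ?_⟩
  rw [← Submodule.ker_mkQ D, LinearMap.mem_ker, map_sub, ← hc]
  simp

theorem AffineIndependent.span_range_sub_eq_top {V ι : Type*} [AddCommGroup V] [Module ℝ V]
    [FiniteDimensional ℝ V] [Fintype ι] {v : ι → V} (hv : AffineIndependent ℝ v)
    (hcard : Fintype.card ι = Module.finrank ℝ V + 1) (k : ι) :
    Submodule.span ℝ (Set.range fun j => v j - v k) = ⊤ := by
  change Submodule.span ℝ (Set.range fun j => v j -ᵥ v k) = ⊤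
  rw [← vectorSpan_range_eq_span_range_vsub_right,
    ← AffineSubspace.affineSpan_eq_top_iff_vectorSpan_eq_top_of_nonempty ℝ V V
      (Set.range_nonempty_iff_nonempty.2 ⟨k⟩),
    hv.affineSpan_eq_top_iff_card_eq_finrank_add_one, hcard]

section Convex

variable {E ι : Type*} [AddCommGroup E] [Module ℝ E] {C : Set E} {p : E} {J : Finset ι}
  {w : ι → E} {a : ι → ℝ}

theorem Convex.add_sum_smul_sub_mem (hC : Convex ℝ C) (hp : p ∈ C) (hw : ∀ j ∈ J, w j ∈ C)
    (ha : ∀ j ∈ J, 0 ≤ a j) (hsum : ∑ j ∈ J, a j ≤ 1) :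
    p + ∑ j ∈ J, a j • (w j - p) ∈ C := by
  rcases (Finset.sum_nonneg ha).eq_or_lt with hzero | hpos
  · rw [eq_comm, Finset.sum_eq_zero_iff_of_nonneg ha] at hzero
    rwa [Finset.sum_eq_zero fun j hj => by rw [hzero j hj, zero_smul], add_zero]
  · have hcenter : p + ∑ j ∈ J, a j • (w j - p) =
        p + (∑ j ∈ J, a j) • (J.centerMass a w - p) := by
      rw [smul_sub, Finset.centerMass, smul_inv_smul₀ hpos.ne', Finset.sum_smul]
      simp only [smul_sub, Finset.sum_sub_distrib]
    rw [hcenter]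
    exact hC.add_smul_sub_mem hp (hC.centerMass_mem ha hpos hw) ⟨hpos.le, hsum⟩

theorem Convex.smul_add_sum_smul_sub_mem_smul (hC : Convex ℝ C) (hp : p ∈ C)
    (hw : ∀ j ∈ J, w j ∈ C) (ha : ∀ j ∈ J, 0 ≤ a j) {t : ℝ} (ht : 0 < t)
    (hsum : ∑ j ∈ J, a j ≤ t) :
    t • p + ∑ j ∈ J, a j • (w j - p) ∈ t • C := by
  have hmem := hC.add_sum_smul_sub_mem hp hw (a := fun j => a j / t)
    (fun j hj => div_nonneg (ha j hj) ht.le) (by rwa [← Finset.sum_div, div_le_one ht])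
  convert Set.smul_mem_smul_set (a := t) hmem using 1
  simp only [smul_add, Finset.smul_sum, smul_smul, mul_div_cancel₀ _ ht.ne']

end Convex

theorem Finset.sum_fract_smul_add_sum_floor_smul {E ι : Type*} [AddCommGroup E] [Module ℝ E]
    (J : Finset ι) (c : ι → ℝ) (u : ι → E) :
    ∑ j ∈ J, Int.fract (c j) • u j + ∑ j ∈ J, ⌊c j⌋ • u j = ∑ j ∈ J, c j • u j := by
  simp only [← Finset.sum_add_distrib, ← Int.cast_smul_eq_zsmul ℝ, ← add_smul, Int.fract_add_floor]

def intLatticeAddSubgroup (n : ℕ) : AddSubgroup (EuclideanSpace ℝ (Fin n)) where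
  carrier := intLattice n
  zero_mem' _ := ⟨0, by simp⟩
  add_mem' ha hb j := by
    obtain ⟨p, hp⟩ := ha j
    obtain ⟨q, hq⟩ := hb j
    exact ⟨p + q, by simp [hp, hq]⟩
  neg_mem' ha j := by
    obtain ⟨p, hp⟩ := ha j
    exact ⟨-p, by simp [hp]⟩

theorem covMin_lattice_simplex_le_general (n : ℕ)
    (v : Fin (n + 1) → EuclideanSpace ℝ (Fin n))
    (hint : ∀ k, v k ∈ intLattice n) (haff : AffineIndependent ℝ v)
    (i : ℕ) (hi1 : 1 ≤ i) :
    covMin n i (convexHull ℝ (Set.range v)) ≤ (i : ℝ) := by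
  have hi : (0 : ℝ) < i := by exact_mod_cast hi1
  refine csInf_le ⟨0, fun μ hμ => hμ.1.le⟩ ⟨hi, ?_⟩
  rintro L ⟨x₀, hx₀⟩ hdim
  set u := fun j => v j - v 0
  obtain ⟨J, hJ, c, hc⟩ := Submodule.exists_finset_card_le_finrank_quotient_sub_sum_smul_mem
    (haff.span_range_sub_eq_top (by simp) 0) L.direction (x₀ - (i : ℝ) • v 0)
  have hJi : J.card ≤ i := by
    rw [Submodule.finrank_quotient, finrank_euclideanSpace_fin, hdim] at hJ
    omega
  set q := (i : ℝ) • v 0 + ∑ j ∈ J, Int.fract (c j) • u j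
  set z := ∑ j ∈ J, ⌊c j⌋ • u j
  have hfract : ∑ j ∈ J, Int.fract (c j) ≤ i :=
    (Finset.sum_le_card_nsmul J _ 1 fun j _ => (Int.fract_lt_one _).le).trans
      (by simpa using hJi)
  have hq : q ∈ (i : ℝ) • convexHull ℝ (Set.range v) :=
    (convex_convexHull ℝ _).smul_add_sum_smul_sub_mem_smul
      (subset_convexHull ℝ _ (Set.mem_range_self 0))
      (fun j _ => subset_convexHull ℝ _ (Set.mem_range_self j))
      (fun j _ => Int.fract_nonneg _) hi hfract
  have hz : z ∈ intLatticeAddSubgroup n :=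
    AddSubgroup.sum_mem _ fun j _ => AddSubgroup.zsmul_mem _ (sub_mem (hint j) (hint 0)) _
  have hqzL : q + z ∈ L := by
    rw [← AffineSubspace.vsub_right_mem_direction_iff_mem hx₀, vsub_eq_sub, add_assoc,
      Finset.sum_fract_smul_add_sum_floor_smul]
    convert neg_mem hc using 1
    abel
  exact ⟨q + z, Set.add_mem_add hq hz, hqzL⟩

/-- For a full-dimensional simplex `T = conv{v_0, …, v_n}` in `ℝⁿ` with integral vertices,
`μ_i(T) ≤ i` for every `i ∈ {1, …, n}`. -/
theorem covMin_lattice_simplex_le (n : ℕ) (hn : 1 ≤ n)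
    (v : Fin (n + 1) → EuclideanSpace ℝ (Fin n))
    (hint : ∀ k, v k ∈ intLattice n) (haff : AffineIndependent ℝ v)
    (i : ℕ) (hi1 : 1 ≤ i) (hi2 : i ≤ n) :
    covMin n i (convexHull ℝ (Set.range v)) ≤ (i : ℝ) :=
  covMin_lattice_simplex_le_general n v hint haff i hi1
end

section
/- Let n ≥ 2 be even and let w ∈ ℤ^{n−1}. Then the set {σ_w(r) : r ∈ {0, 1, …, n}} has exactly n+1 elements, i.e. the values σ_w(0), σ_w(1), …, σ_w(n) are pairwise distinct. -/
/-- `σ_w(r) = ∑_{i=1}^{n-1} [w_i + r]_{n+1}`, where `[k]_m ∈ {0, …, m-1}` denotes the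
representative of `k` modulo `m` (here realized by `Int.emod` with positive modulus). -/
def sigmaSum (n : ℕ) (w : Fin (n - 1) → ℤ) (r : ℤ) : ℤ :=
  ∑ i, (w i + r) % ((n : ℤ) + 1)

/-- For even `n ≥ 2` and `w ∈ ℤ^{n-1}`, the values `σ_w(0), σ_w(1), …, σ_w(n)` are pairwise
distinct, i.e. the set `{σ_w(r) : r ∈ {0, …, n}}` has exactly `n+1` elements. -/
theorem sigmaSum_card_of_even (n : ℕ) (hn : 2 ≤ n) (heven : Even n) (w : Fin (n - 1) → ℤ) :
    ((Finset.range (n + 1)).image fun r : ℕ => sigmaSum n w (r : ℤ)).card = n + 1 := by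
  obtain ⟨k, hk⟩ := heven
  set m : ℤ := (n : ℤ) + 1 with hm
  have hmpos : (0:ℤ) < m := by positivity
  have hcast : ((n - 1 : ℕ) : ℤ) = (n : ℤ) - 1 := by
    have : 1 ≤ n := by omega
    push_cast [this]; ring
  have key : ∀ t : ℤ, sigmaSum n w t % m = ((∑ i, w i) + ((n:ℤ) - 1) * t) % m := by
    intro t
    unfold sigmaSum
    rw [← Finset.sum_int_mod]
    congr 1
    rw [Finset.sum_add_distrib, Finset.sum_const, Finset.card_univ, Fintype.card_fin,
      nsmul_eq_mul, hcast]
  have hcop : Int.gcd ((n:ℤ) - 1) m = 1 := by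
    rw [← Int.isCoprime_iff_gcd_eq_one]
    refine ⟨(k : ℤ), 1 - (k : ℤ), ?_⟩
    have : (n : ℤ) = 2 * k := by push_cast [hk]; ring
    rw [hm, this]; ring
  rw [Finset.card_image_of_injOn, Finset.card_range]
  intro r hr s hs h
  simp only [Finset.coe_range, Set.mem_Iio] at hr hs
  have h' : sigmaSum n w (r : ℤ) = sigmaSum n w (s : ℤ) := h
  have h1 : (∑ i, w i) + ((n:ℤ) - 1) * r ≡ (∑ i, w i) + ((n:ℤ) - 1) * s [ZMOD m] := by
    rw [Int.ModEq, ← key (r : ℤ), h', key (s : ℤ)]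
  have h2 : ((n:ℤ) - 1) * r ≡ ((n:ℤ) - 1) * s [ZMOD m] := h1.add_left_cancel' _
  have h3 : (r : ℤ) ≡ (s : ℤ) [ZMOD m] := by
    have := h2.cancel_left_div_gcd hmpos
    rwa [Int.gcd_comm, hcop, Nat.cast_one, Int.ediv_one] at this
  have hr2 : (r : ℤ) % m = r := Int.emod_eq_of_lt (by positivity) (by omega)
  have hs2 : (s : ℤ) % m = s := Int.emod_eq_of_lt (by positivity) (by omega)
  have : (r : ℤ) = s := by rw [Int.ModEq, hr2, hs2] at h3; exact h3
  exact_mod_cast this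
end

section
/- Let n ≥ 3 be odd and let w ∈ ℤ^{n−1}. Then (a) there do not exist three pairwise distinct r, s, t ∈ {0, 1, …, n} with σ_w(r) = σ_w(s) = σ_w(t), and (b) for all r, r' ∈ ℤ, the difference σ_w(r) − σ_w(r') is even. -/
/-- For odd `n ≥ 3` and `w ∈ ℤ^{n-1}`: (a) no three of the numbers `σ_w(r)`,
`r ∈ {0, …, n}`, are pairwise equal, and (b) `σ_w(r) - σ_w(r')` is always even. -/
theorem sigmaSum_of_odd (n : ℕ) (hn : 3 ≤ n) (hodd : Odd n) (w : Fin (n - 1) → ℤ) :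
    (¬∃ r s t : ℤ, 0 ≤ r ∧ r ≤ n ∧ 0 ≤ s ∧ s ≤ n ∧ 0 ≤ t ∧ t ≤ n ∧
      r ≠ s ∧ r ≠ t ∧ s ≠ t ∧
      sigmaSum n w r = sigmaSum n w s ∧ sigmaSum n w s = sigmaSum n w t) ∧
    (∀ r r' : ℤ, Even (sigmaSum n w r - sigmaSum n w r')) := by
  obtain ⟨k, hk⟩ := hodd
  have hk1 : 1 ≤ k := by omega
  have hkz : 1 ≤ (k : ℤ) := by exact_mod_cast hk1
  have hn2 : (n : ℤ) = 2 * (k : ℤ) + 1 := by exact_mod_cast congrArg (Nat.cast : ℕ → ℤ) hk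
  have key : ∀ s r : ℤ, ((n:ℤ)+1) ∣ (sigmaSum n w s - sigmaSum n w r - ((n:ℤ)-1) * (s - r)) := by
    intro s r
    have hcast : (((n - 1 : ℕ)) : ℤ) = (n:ℤ) - 1 := by omega
    have h1 : sigmaSum n w s - sigmaSum n w r - ((n:ℤ)-1) * (s - r)
        = ∑ i : Fin (n-1), ((w i + s) % ((n:ℤ)+1) - (w i + r) % ((n:ℤ)+1) - (s - r)) := by
      unfold sigmaSum
      rw [Finset.sum_sub_distrib, Finset.sum_sub_distrib, Finset.sum_const,
        Finset.card_fin, nsmul_eq_mul, hcast]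
    rw [h1]
    apply Finset.dvd_sum
    intro i _
    exact ⟨(w i + r)/((n:ℤ)+1) - (w i + s)/((n:ℤ)+1), by
      rw [Int.emod_def, Int.emod_def]; ring⟩
  have hdiff : ∀ x y : ℤ, 0 ≤ x → x ≤ n → 0 ≤ y → y ≤ n → x ≠ y →
      sigmaSum n w x = sigmaSum n w y → y - x = (k:ℤ)+1 ∨ y - x = -((k:ℤ)+1) := by
    intro x y hx hxn hy hyn hxy heq
    have h2 : ((n:ℤ)+1) ∣ ((n:ℤ)-1)*(y-x) := by
      have h := key y x
      rw [← heq, sub_self, zero_sub] at h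
      exact (dvd_neg).mp h
    rw [hn2] at h2
    have h3 : ((k:ℤ)+1) ∣ (k:ℤ)*(y-x) := by
      have h2' : 2 * ((k:ℤ)+1) ∣ 2 * ((k:ℤ)*(y-x)) := by
        rw [show (2:ℤ) * ((k:ℤ)+1) = 2*(k:ℤ)+1+1 by ring,
          show (2:ℤ) * ((k:ℤ)*(y-x)) = (2*(k:ℤ)+1-1)*(y-x) by ring]
        exact h2
      exact (mul_dvd_mul_iff_left (two_ne_zero)).mp h2'
    have h4 : ((k:ℤ)+1) ∣ (y-x) := by
      have h5 : ((k:ℤ)+1) ∣ ((k:ℤ)+1)*(y-x) := Dvd.intro _ rfl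
      have h6 := dvd_sub h5 h3
      have h7 : ((k:ℤ)+1)*(y-x) - (k:ℤ)*(y-x) = y - x := by ring
      rwa [h7] at h6
    obtain ⟨c, hc⟩ := h4
    rw [hn2] at hxn hyn
    have hcz : c ≠ 0 := by rintro rfl; simp at hc; omega
    have hub : ((k:ℤ)+1)*c ≤ 2*(k:ℤ)+1 := by omega
    have hlb : -(2*(k:ℤ)+1) ≤ ((k:ℤ)+1)*c := by omega
    have hc1 : c = 1 ∨ c = -1 := by
      rcases le_or_gt c (-1) with h|h
      · right
        by_contra h'
        have hcc : c ≤ -2 := by omega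
        nlinarith
      · left
        by_contra h'
        have hcc : 2 ≤ c := by omega
        nlinarith
    rcases hc1 with rfl|rfl
    · left; omega
    · right; omega
  constructor
  · rintro ⟨r, s, t, hr0, hrn, hs0, hsn, ht0, htn, hrs, hrt, hst, h1, h2⟩
    have d1 := hdiff r s hr0 hrn hs0 hsn hrs h1
    have d2 := hdiff s t hs0 hsn ht0 htn hst h2
    have d3 := hdiff r t hr0 hrn ht0 htn hrt (h1.trans h2)
    rcases d1 with d1|d1 <;> rcases d2 with d2|d2 <;> rcases d3 with d3|d3 <;> omega
  · intro r r'
    obtain ⟨c, hc⟩ := key r r'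
    rw [hn2] at hc
    refine ⟨((k:ℤ)+1)*c + (k:ℤ)*(r-r'), ?_⟩
    linarith [hc]
end

section
/- Let n ≥ 2 and let w ∈ ℤ^{n−1}. Then there exists r ∈ {0, 1, …, n} such that σ_w(r) ≤ n(n−1)/2 − r. -/
/-- Sum of `m` distinct integers, each at least `L`, is at least `m*L + (0+1+...+(m-1))`. -/
lemma sum_distinct_ge (L : ℤ) : ∀ (m : ℕ) (s : Finset ℤ), s.card = m → (∀ x ∈ s, L ≤ x) →
    (m : ℤ) * L + ∑ k ∈ Finset.range m, (k : ℤ) ≤ ∑ x ∈ s, x := by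
  intro m
  induction m with
  | zero =>
      intro s hcard _
      simp [Finset.card_eq_zero.mp hcard]
  | succ m ih =>
      intro s hcard hL
      have hne : s.Nonempty := Finset.card_pos.mp (by omega)
      set M := s.max' hne with hM
      have hMmem : M ∈ s := s.max'_mem hne
      have hsub : s ⊆ Finset.Icc L M := by
        intro x hx
        exact Finset.mem_Icc.mpr ⟨hL x hx, s.le_max' x hx⟩
      have hcard2 : s.card ≤ (Finset.Icc L M).card := Finset.card_le_card hsub
      rw [Int.card_Icc] at hcard2
      have hMge : L + (m : ℤ) ≤ M := by omega
      have hcard3 : (s.erase M).card = m := by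
        rw [Finset.card_erase_of_mem hMmem, hcard]
        omega
      have hL' : ∀ x ∈ s.erase M, L ≤ x := fun x hx => hL x (Finset.mem_of_mem_erase hx)
      have hsum := ih (s.erase M) hcard3 hL'
      have hsplit : ∑ x ∈ s.erase M, x + M = ∑ x ∈ s, x := Finset.sum_erase_add s _ hMmem
      rw [Finset.sum_range_succ]
      push_cast
      linarith

lemma sigma_mod (n : ℕ) (hn : 2 ≤ n) (w : Fin (n - 1) → ℤ) (r : ℤ) :
    (sigmaSum n w r + r) % ((n : ℤ) + 1) = ((∑ i, w i) - r) % ((n : ℤ) + 1) := by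
  have h1 : sigmaSum n w r % ((n : ℤ) + 1) = (∑ i, (w i + r)) % ((n : ℤ) + 1) := by
    unfold sigmaSum
    rw [← Finset.sum_int_mod]
  have h2 : (∑ i, (w i + r)) = (∑ i, w i) + ((n : ℤ) - 1) * r := by
    rw [Finset.sum_add_distrib, Finset.sum_const, Finset.card_univ, Fintype.card_fin]
    have : ((n - 1 : ℕ) : ℤ) = (n : ℤ) - 1 := by
      have := Nat.cast_sub (by omega : 1 ≤ n) (R := ℤ)
      simpa using this
    rw [nsmul_eq_mul, this]
  have key : (sigmaSum n w r + r) ≡ ((∑ i, w i) - r) [ZMOD ((n : ℤ) + 1)] := by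
    have hs : sigmaSum n w r ≡ (∑ i, w i) + ((n : ℤ) - 1) * r [ZMOD ((n : ℤ) + 1)] := by
      unfold Int.ModEq
      rw [h1, h2]
    have hs2 : sigmaSum n w r + r ≡ (∑ i, w i) + ((n : ℤ) - 1) * r + r [ZMOD ((n : ℤ) + 1)] :=
      hs.add_right r
    refine hs2.trans ?_
    have : ((n : ℤ) + 1) ∣ (((∑ i, w i) - r) - ((∑ i, w i) + ((n : ℤ) - 1) * r + r)) :=
      ⟨-r, by ring⟩
    exact (Int.modEq_iff_dvd.mpr this)
  exact key

/-- For `n ≥ 2` and any `w ∈ ℤ^{n-1}`, there is an `r ∈ {0, 1, …, n}` with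
`σ_w(r) ≤ n(n-1)/2 - r`; i.e. the diameter of the quotient lattice graph `LG_n^+/Λ_n`
is at most `n(n-1)/2`. -/
theorem sigmaSum_exists_le (n : ℕ) (hn : 2 ≤ n) (w : Fin (n - 1) → ℤ) :
    ∃ r : ℤ, 0 ≤ r ∧ r ≤ n ∧
      sigmaSum n w r ≤ (n : ℤ) * ((n : ℤ) - 1) / 2 - r := by
  by_contra hcon
  push_neg at hcon
  set K : ℤ := (n : ℤ) * ((n : ℤ) - 1) / 2 with hK
  set m : ℤ := (n : ℤ) + 1 with hm
  -- the function f
  set f : Fin (n + 1) → ℤ := fun r => sigmaSum n w (r : ℤ) + (r : ℤ) with hf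
  -- lower bound on f
  have hlb : ∀ r : Fin (n + 1), K + 1 ≤ f r := by
    intro r
    have h0 : (0 : ℤ) ≤ (r : ℤ) := by positivity
    have h1 : ((r : ℕ) : ℤ) ≤ (n : ℤ) := by exact_mod_cast Nat.lt_succ_iff.mp r.isLt
    have := hcon (r : ℤ) h0 h1
    simp only [hf]
    omega
  -- injectivity of f
  have hinj : Function.Injective f := by
    intro r s hrs
    have h1 := sigma_mod n hn w (r : ℤ)
    have h2 := sigma_mod n hn w (s : ℤ)
    have heq : ((∑ i, w i) - (r : ℤ)) % m = ((∑ i, w i) - (s : ℤ)) % m := by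
      rw [← h1, ← h2]
      simp only [hf] at hrs
      rw [hrs]
    have hmod : ((r : ℤ)) ≡ ((s : ℤ)) [ZMOD m] := by
      have h3 : ((∑ i, w i) - (r : ℤ)) ≡ ((∑ i, w i) - (s : ℤ)) [ZMOD m] := heq
      have h4 := (Int.ModEq.refl (∑ i, w i)).sub h3
      simpa using h4
    have hr : (r : ℤ) % m = (r : ℤ) := Int.emod_eq_of_lt (Int.natCast_nonneg _)
      (by rw [hm]; exact_mod_cast r.isLt)
    have hs : (s : ℤ) % m = (s : ℤ) := Int.emod_eq_of_lt (Int.natCast_nonneg _)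
      (by rw [hm]; exact_mod_cast s.isLt)
    have : (r : ℤ) = (s : ℤ) := by
      have := hmod
      unfold Int.ModEq at this
      rw [hr, hs] at this
      exact this
    exact Fin.ext (by exact_mod_cast this)
  -- Gauss sum
  set T : ℤ := ∑ k ∈ Finset.range (n + 1), (k : ℤ) with hT
  have hGauss : T * 2 = ((n : ℤ) + 1) * n := by
    have : (∑ i ∈ Finset.range (n + 1), i) * 2 = (n + 1) * n := by
      simpa using Finset.sum_range_id_mul_two (n + 1)
    have hcast : ((∑ i ∈ Finset.range (n + 1), i : ℕ) : ℤ) = T := by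
      push_cast [hT]; rfl
    calc T * 2 = ((∑ i ∈ Finset.range (n + 1), i : ℕ) : ℤ) * 2 := by rw [hcast]
      _ = (((∑ i ∈ Finset.range (n + 1), i) * 2 : ℕ) : ℤ) := by push_cast; ring
      _ = (((n + 1) * n : ℕ) : ℤ) := by rw [this]
      _ = ((n : ℤ) + 1) * n := by push_cast; ring
  have hTfin : ∑ r : Fin (n + 1), ((r : ℕ) : ℤ) = T := by
    rw [hT, ← Fin.sum_univ_eq_sum_range (fun k => (k : ℤ)) (n + 1)]
  -- total sum of f
  have hinner : ∀ i : Fin (n - 1), ∑ r : Fin (n + 1), (w i + (r : ℤ)) % m = T := by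
    intro i
    have hmpos : (0 : ℤ) < m := by positivity
    have hbound : ∀ r : Fin (n + 1), ((w i + (r : ℤ)) % m).toNat < n + 1 := by
      intro r
      have h1 := Int.emod_nonneg (w i + (r : ℤ)) (ne_of_gt hmpos)
      have h2 := Int.emod_lt_of_pos (w i + (r : ℤ)) hmpos
      omega
    set e : Fin (n + 1) → Fin (n + 1) := fun r => ⟨((w i + (r : ℤ)) % m).toNat, hbound r⟩
      with he
    have heinj : Function.Injective e := by
      intro r s hrs
      have h1 := Int.emod_nonneg (w i + (r : ℤ)) (ne_of_gt hmpos)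
      have h2 := Int.emod_nonneg (w i + (s : ℤ)) (ne_of_gt hmpos)
      have hval : ((w i + (r : ℤ)) % m).toNat = ((w i + (s : ℤ)) % m).toNat :=
        congrArg Fin.val hrs
      have heq : (w i + (r : ℤ)) % m = (w i + (s : ℤ)) % m := by omega
      have hmod : (w i + (r : ℤ)) ≡ (w i + (s : ℤ)) [ZMOD m] := heq
      have hmod2 : ((r : ℤ)) ≡ ((s : ℤ)) [ZMOD m] := by
        have := (Int.ModEq.refl (w i)).symm.add hmod
        simpa using (Int.ModEq.add_left_cancel (Int.ModEq.refl (w i)) hmod)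
      have hr : (r : ℤ) % m = (r : ℤ) := Int.emod_eq_of_lt (Int.natCast_nonneg _)
        (by rw [hm]; exact_mod_cast r.isLt)
      have hs : (s : ℤ) % m = (s : ℤ) := Int.emod_eq_of_lt (Int.natCast_nonneg _)
        (by rw [hm]; exact_mod_cast s.isLt)
      have : (r : ℤ) = (s : ℤ) := by
        have := hmod2
        unfold Int.ModEq at this
        rw [hr, hs] at this
        exact this
      exact Fin.ext (by exact_mod_cast this)
    have hbij : Function.Bijective e := Finite.injective_iff_bijective.mp heinj
    have := Fintype.sum_bijective e hbij (fun r => (w i + (r : ℤ)) % m)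
      (fun s => ((s : ℕ) : ℤ)) ?_
    · rw [this, hTfin]
    · intro r
      simp only [he]
      exact (Int.toNat_of_nonneg (Int.emod_nonneg _ (ne_of_gt hmpos))).symm
  have htotal : ∑ r : Fin (n + 1), f r = ((n : ℤ) - 1) * T + T := by
    simp only [hf]
    rw [Finset.sum_add_distrib, hTfin]
    congr 1
    unfold sigmaSum
    rw [Finset.sum_comm]
    rw [Finset.sum_congr rfl (fun i _ => hinner i)]
    rw [Finset.sum_const, Finset.card_univ, Fintype.card_fin, nsmul_eq_mul]
    congr 1
    have := Nat.cast_sub (by omega : 1 ≤ n) (R := ℤ)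
    simpa using this
  -- apply the distinct-integers lemma
  set s : Finset ℤ := Finset.image f Finset.univ with hsdef
  have hcard : s.card = n + 1 := by
    rw [hsdef, Finset.card_image_of_injective _ hinj, Finset.card_univ, Fintype.card_fin]
  have hLs : ∀ x ∈ s, K + 1 ≤ x := by
    intro x hx
    obtain ⟨r, _, hr⟩ := Finset.mem_image.mp hx
    exact hr ▸ hlb r
  have hsum_s : ∑ x ∈ s, x = ∑ r : Fin (n + 1), f r := by
    rw [hsdef, Finset.sum_image (fun a _ b _ h => hinj h)]
  have hmain := sum_distinct_ge (K + 1) (n + 1) s hcard hLs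
  rw [hsum_s, htotal, ← hT] at hmain
  -- evenness of n(n-1)
  have heven : (2 : ℤ) ∣ (n : ℤ) * ((n : ℤ) - 1) := by
    rcases Int.even_or_odd (n : ℤ) with h | h
    · exact Dvd.dvd.mul_right h.two_dvd _
    · have : Even ((n : ℤ) - 1) := by
        rcases h with ⟨k, hk⟩
        exact ⟨k, by omega⟩
      exact Dvd.dvd.mul_left this.two_dvd _
  have h2K : 2 * K = (n : ℤ) * ((n : ℤ) - 1) := Int.mul_ediv_cancel' heven
  have hn2 : (2 : ℤ) ≤ (n : ℤ) := by exact_mod_cast hn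
  -- derive contradiction
  -- hmain : (n+1) * (K+1) + T ≤ (n-1)*T + T
  have hineq : ((n : ℤ) + 1) * (K + 1) ≤ ((n : ℤ) - 1) * T := by
    push_cast at hmain
    linarith
  nlinarith [hGauss, h2K, hineq, hn2]
end

section
/- Let n ≥ 2 and let w = (2, 3, …, n) ∈ ℤ^{n−1}. Then for every r ∈ {0, 1, …, n}, σ_w(r) ≥ n(n−1)/2 − r, and σ_w(r) = n(n−1)/2 − r holds only for r = n−1. -/
open Finset

lemma two_mul_sum_range (m : ℕ) :
    2 * ∑ i ∈ Finset.range m, (i : ℤ) = (m : ℤ) * ((m : ℤ) - 1) := by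
  induction m with
  | zero => simp
  | succ k ih => rw [Finset.sum_range_succ, mul_add, ih]; push_cast; ring

lemma sigma_eq_range (n : ℕ) (r : ℤ) :
    sigmaSum n (fun i => (i : ℤ) + 2) r
      = ∑ i ∈ Finset.range (n-1), ((i : ℤ) + 2 + r) % ((n : ℤ) + 1) := by
  unfold sigmaSum
  exact Fin.sum_univ_eq_sum_range (fun i => ((i : ℤ) + 2 + r) % ((n : ℤ) + 1)) (n-1)

lemma lemA (n : ℕ) (hn : 2 ≤ n) (s : ℕ) (hs : (s:ℤ) ≤ (n:ℤ) - 1) :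
    2 * sigmaSum n (fun i => (i : ℤ) + 2) (s:ℤ)
      = (n:ℤ) * ((n:ℤ)+1) - 4*(s:ℤ) - 2 := by
  have hsn : s ≤ n - 1 := by omega
  rw [sigma_eq_range]
  have hsplit : n - 1 = (n - 1 - s) + s := by omega
  set a := n - 1 - s with ha
  have haZ : (a : ℤ) = (n:ℤ) - 1 - s := by omega
  rw [hsplit, Finset.sum_range_add]
  have h1 : ∀ i ∈ Finset.range a,
      ((i : ℤ) + 2 + s) % ((n : ℤ) + 1) = (i : ℤ) + 2 + s := by
    intro i hi
    rw [Finset.mem_range] at hi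
    have : (i : ℤ) < (a : ℤ) := by exact_mod_cast hi
    exact Int.emod_eq_of_lt (by omega) (by omega)
  have h2 : ∀ i ∈ Finset.range s,
      (((a + i : ℕ) : ℤ) + 2 + s) % ((n : ℤ) + 1) = (i : ℤ) := by
    intro i hi
    rw [Finset.mem_range] at hi
    have hi' : (i : ℤ) < (s : ℤ) := by exact_mod_cast hi
    have : ((a + i : ℕ) : ℤ) + 2 + s = (i : ℤ) + ((n:ℤ)+1) * 1 := by push_cast; omega
    rw [this, Int.add_mul_emod_self_left]
    exact Int.emod_eq_of_lt (by omega) (by omega)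
  rw [Finset.sum_congr rfl h1, Finset.sum_congr rfl h2]
  have h3 : ∑ i ∈ Finset.range a, ((i : ℤ) + 2 + s)
      = (∑ i ∈ Finset.range a, (i:ℤ)) + a * (2 + s) := by
    rw [Finset.sum_add_distrib, Finset.sum_add_distrib, Finset.sum_const,
      Finset.sum_const, Finset.card_range, nsmul_eq_mul, nsmul_eq_mul]
    ring
  rw [h3]
  have g1 := two_mul_sum_range a
  have g2 := two_mul_sum_range s
  have : (2:ℤ) * (((∑ i ∈ Finset.range a, (i:ℤ)) + a * (2 + s)) + ∑ i ∈ Finset.range s, (i:ℤ))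
      = ((a:ℤ) * ((a:ℤ)-1) + 2*(a:ℤ)*(2+s)) + (s:ℤ)*((s:ℤ)-1) := by
    linarith
  rw [this, haZ]
  ring

lemma lemB (n : ℕ) (hn : 2 ≤ n) :
    2 * sigmaSum n (fun i => (i : ℤ) + 2) (n:ℤ) = (n:ℤ) * ((n:ℤ)-1) := by
  rw [sigma_eq_range]
  have h : ∀ i ∈ Finset.range (n-1),
      ((i : ℤ) + 2 + n) % ((n : ℤ) + 1) = (i : ℤ) + 1 := by
    intro i hi
    rw [Finset.mem_range] at hi
    have hi' : (i : ℤ) < (n:ℤ) - 1 := by omega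
    have : (i : ℤ) + 2 + n = ((i:ℤ) + 1) + ((n:ℤ)+1) * 1 := by ring
    rw [this, Int.add_mul_emod_self_left]
    have : 0 ≤ (i:ℤ) := Int.ofNat_nonneg i
    exact Int.emod_eq_of_lt (by omega) (by omega)
  rw [Finset.sum_congr rfl h, Finset.sum_add_distrib]
  simp [Finset.sum_const]
  have := two_mul_sum_range (n-1)
  have hc : ((n-1 : ℕ) : ℤ) = (n:ℤ) - 1 := by omega
  rw [hc] at this
  linarith

/-- For `n ≥ 2` and the vector `w = (2, 3, …, n) ∈ ℤ^{n-1}` (so `w_i = i + 2` for the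
zero-based index `i`), every `r ∈ {0, 1, …, n}` satisfies `σ_w(r) ≥ n(n-1)/2 - r`, with
equality only for `r = n - 1`; i.e. the vertex `w` witnesses that the diameter of the
quotient lattice graph `LG_n^+/Λ_n` is at least `n(n-1)/2`. -/
theorem sigmaSum_special_ge (n : ℕ) (hn : 2 ≤ n) (r : ℤ) (hr0 : 0 ≤ r) (hrn : r ≤ n) :
    (n : ℤ) * ((n : ℤ) - 1) / 2 - r ≤ sigmaSum n (fun i => (i : ℤ) + 2) r ∧
    (sigmaSum n (fun i => (i : ℤ) + 2) r = (n : ℤ) * ((n : ℤ) - 1) / 2 - r →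
      r = (n : ℤ) - 1) := by
  have heven : Even ((n:ℤ) * ((n:ℤ)-1)) := by
    have := Int.even_mul_succ_self ((n:ℤ) - 1)
    simpa [mul_comm, sub_add_cancel] using this
  have hD : (n : ℤ) * ((n : ℤ) - 1) / 2 * 2 = (n:ℤ) * ((n:ℤ)-1) :=
    Int.ediv_mul_cancel heven.two_dvd
  rcases eq_or_lt_of_le hrn with hrn' | hrn'
  · -- r = n
    have h2 := lemB n hn
    rw [← hrn'] at h2
    constructor
    · nlinarith [h2, hD]
    · intro heq
      exfalso
      rw [heq] at h2
      nlinarith [hD, hn]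
  · -- r ≤ n - 1
    obtain ⟨s, rfl⟩ := Int.eq_ofNat_of_zero_le hr0
    have hs : (s:ℤ) ≤ (n:ℤ) - 1 := by omega
    have h2 := lemA n hn s hs
    constructor
    · nlinarith [h2, hD]
    · intro heq
      rw [heq] at h2
      nlinarith [hD]
end
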